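/- arXiv:1303.3681 — 7 statements merged into one kernel-verified Lean document; each statement's English description precedes it below -/
import Mathlib

section
/- Let a > 0 and let (a_n) be a complex sequence with Re(a_n) ≥ a/2 and |Im(a_n)| ≤ c₀|g₀| for all n, where g₀ is a complex number with |g₀| < ε and |Arg(g₀)| ≤ π − δ for some δ ∈ (0, π/2). Define A_n = (1/n)·Σ_{k=0}^{n-1} a_k and g̃_n = g₀/(1 + g₀·n·A_n). Then, if ε is small enough (depending on δ, a, c₀), for all n ≥ 0 one has |1 + g₀·n·A_n| ≥ (1/2)·sin δ; in particular g̃_n is well defined. -/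
/-!
Write `S = ∑ a_k`, so that `1 + g₀ n A_n = 1 + g₀ S`. Once `ε` is small, the hypotheses put every
`a_k`, hence `S`, in the sector `|Im z| ≤ (sin δ / 2) Re z`. A point `w` with `|arg w| ≤ π - δ`
satisfies `Re w ≥ -cos δ ‖w‖`, and then `‖1 + w‖² ≥ 1 - 2 cos δ ‖w‖ + ‖w‖²`, which is both
`(‖w‖ - cos δ)² + sin² δ` and `(1 - cos δ ‖w‖)² + sin² δ ‖w‖²`; so `2 ‖1 + w‖ ≥ sin δ (1 + ‖w‖)`.
For `w = (Re S) g₀` the growth `sin δ ‖w‖` absorbs the error `|Im S| ‖g₀‖`.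
-/

open Real Complex

namespace Complex

theorem neg_cos_mul_norm_le_re_of_abs_arg_le {δ : ℝ} {z : ℂ} (hδ : 0 ≤ δ)
    (h : |z.arg| ≤ π - δ) : -(Real.cos δ * ‖z‖) ≤ z.re := by
  have hcos : Real.cos (π - δ) ≤ Real.cos |z.arg| :=
    Real.cos_le_cos_of_nonneg_of_le_pi (abs_nonneg _) (by linarith) h
  rw [Real.cos_pi_sub, Real.cos_abs] at hcos
  rw [← norm_mul_cos_arg]
  nlinarith [norm_nonneg z]

theorem sin_mul_one_add_norm_le_two_mul_norm_one_add {δ : ℝ} {w : ℂ}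
    (h : -(Real.cos δ * ‖w‖) ≤ w.re) : Real.sin δ * (1 + ‖w‖) ≤ 2 * ‖1 + w‖ := by
  have hw : ‖w‖ ^ 2 = w.re ^ 2 + w.im ^ 2 := by rw [Complex.sq_norm, normSq_apply]; ring
  have hsq : ‖1 + w‖ ^ 2 = 1 + 2 * w.re + ‖w‖ ^ 2 := by
    rw [Complex.sq_norm, normSq_apply, ← sq, ← sq, hw]
    simp only [add_re, add_im, one_re, one_im]
    ring
  have hpyth := Real.sin_sq_add_cos_sq δ
  have hnorm := norm_nonneg (1 + w)
  have h₁ : Real.sin δ ≤ ‖1 + w‖ :=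
    (abs_le_of_sq_le_sq' (by nlinarith [sq_nonneg (‖w‖ - Real.cos δ)]) hnorm).2
  have h₂ : Real.sin δ * ‖w‖ ≤ ‖1 + w‖ :=
    (abs_le_of_sq_le_sq' (by nlinarith [sq_nonneg (1 - Real.cos δ * ‖w‖)]) hnorm).2
  linarith

theorem abs_im_sum_le_mul_re_sum {ι : Type*} (s : Finset ι) (f : ι → ℂ) {η : ℝ}
    (h : ∀ i ∈ s, |(f i).im| ≤ η * (f i).re) :
    |(∑ i ∈ s, f i).im| ≤ η * (∑ i ∈ s, f i).re := by
  rw [im_sum, re_sum, Finset.mul_sum]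
  exact (Finset.abs_sum_le_sum_abs _ _).trans (Finset.sum_le_sum h)

theorem sin_div_two_le_norm_one_add_mul {δ : ℝ} {g S : ℂ} (hg : -(Real.cos δ * ‖g‖) ≤ g.re)
    (hS : |S.im| ≤ Real.sin δ / 2 * S.re) : Real.sin δ / 2 ≤ ‖1 + g * S‖ := by
  rcases le_or_gt (Real.sin δ) 0 with hsin | hsin
  · linarith [norm_nonneg (1 + g * S)]
  have hre : 0 ≤ S.re := by nlinarith [abs_nonneg S.im]
  set w := (S.re : ℂ) * g
  have hw : -(Real.cos δ * ‖w‖) ≤ w.re := by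
    simp only [w, norm_mul, norm_real, Real.norm_of_nonneg hre, re_ofReal_mul]
    nlinarith
  have hsplit : 1 + g * S = (1 + w) - (-(S.im * g * I)) := by
    conv_lhs => rw [← re_add_im S]
    ring
  have herr : ‖-(S.im * g * I)‖ = |S.im| * ‖g‖ := by simp
  have hmain := sin_mul_one_add_norm_le_two_mul_norm_one_add hw
  have hwnorm : ‖w‖ = S.re * ‖g‖ := by simp [w, Real.norm_of_nonneg hre]
  have htriangle := norm_sub_norm_le (1 + w) (-(S.im * g * I))
  rw [← hsplit, herr] at htriangle
  nlinarith [norm_nonneg g]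

end Complex

theorem stmt_0 (a c₀ δ : ℝ) (ha : 0 < a) (hc₀ : 0 < c₀)
    (hδ : δ ∈ Set.Ioo 0 (π / 2)) :
    ∃ ε₀ > 0, ∀ ε : ℝ, 0 < ε → ε ≤ ε₀ →
      ∀ g₀ : ℂ, ‖g₀‖ < ε → |g₀.arg| ≤ π - δ →
        ∀ aseq : ℕ → ℂ,
          (∀ n, a / 2 ≤ (aseq n).re) →
          (∀ n, |(aseq n).im| ≤ c₀ * ‖g₀‖) →
          ∀ n : ℕ,
            Real.sin δ / 2 ≤
              ‖1 + g₀ * n * ((n : ℂ)⁻¹ * ∑ k ∈ Finset.range n, aseq k)‖ := by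
  have hsin : 0 < Real.sin δ := Real.sin_pos_of_pos_of_lt_pi hδ.1 (by linarith [hδ.2, pi_pos])
  refine ⟨a * Real.sin δ / (4 * c₀), by positivity, fun ε _ hεε₀ g₀ hg₀ harg aseq hre him n => ?_⟩
  have hsector : ∀ k, |(aseq k).im| ≤ Real.sin δ / 2 * (aseq k).re := fun k => by
    have hsmall : c₀ * ‖g₀‖ ≤ Real.sin δ / 2 * (a / 2) := calc
      c₀ * ‖g₀‖ ≤ c₀ * (a * Real.sin δ / (4 * c₀)) := by gcongr; linarith
      _ = Real.sin δ / 2 * (a / 2) := by field_simp; ring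
    nlinarith [him k, hre k]
  have hcancel : g₀ * n * ((n : ℂ)⁻¹ * ∑ k ∈ Finset.range n, aseq k)
      = g₀ * ∑ k ∈ Finset.range n, aseq k := by
    rcases eq_or_ne n 0 with rfl | hn
    · simp
    · field_simp
  rw [hcancel]
  exact sin_div_two_le_norm_one_add_mul (neg_cos_mul_norm_le_re_of_abs_arg_le hδ.1.le harg)
    (abs_im_sum_le_mul_re_sum _ _ fun k _ => hsector k)
end

section
/- Let δ ∈ (0, π/2), a > 0, c₀ > 0. There exists ε₀ = ε₀(δ, a, c₀) > 0 such that: if g₀ ∈ ℂ satisfies |g₀| < ε ≤ ε₀ and |Arg g₀| ≤ π − δ, and (a_n) satisfies Re(a_n) ≥ a/2, |a_n − a| ≤ c₀|g₀|, then setting A_n = (1/n)Σ_{k<n} a_k and g̃_n = g₀/(1 + g₀ n A_n), one has |g̃_n| ≤ 2ε/sin δ and |Arg g̃_n| ≤ π − δ/2 for all n ≥ 1. -/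
/-!
With `z = g₀⁻¹` and `S = ∑_{k<n} a_k` one has `g̃_n = (z + S)⁻¹`. The hypotheses put `S` in the
sector `|arg| ≤ δ / 2`, since `|Im S| ≤ n c₀ |g₀|` is small compared with `Re S ≥ n a / 2`, while
`z` stays outside the sector `|arg| < δ` around the negative axis. The quantity
`‖w‖ sin (|arg w| + δ / 2) = Re w sin (δ / 2) + |Im w| cos (δ / 2)` is at least `‖z‖ sin (δ / 2)`
at `w = z` and does not decrease when `S` is added. Hence `‖z + S‖ ≥ sin (δ / 2) / |g₀|`, and
`sin (|arg (z + S)| + δ / 2) > 0` forces `|arg (z + S)| < π - δ / 2`.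
-/

open Real Complex

theorem Real.sin_le_sin_of_le_of_le_pi_sub {η φ : ℝ} (hη : 0 ≤ η) (hηφ : η ≤ φ) (hφ : φ ≤ π - η) :
    sin η ≤ sin φ := by
  rcases le_total φ (π / 2) with hφ2 | hφ2
  · exact sin_le_sin_of_le_of_le_pi_div_two (by linarith) hφ2 hηφ
  · rw [← sin_pi_sub φ]
    exact sin_le_sin_of_le_of_le_pi_div_two (by linarith) (by linarith) (by linarith)

theorem Real.sin_le_two_mul_sin_half {x : ℝ} (hx : 0 ≤ sin (x / 2)) : sin x ≤ 2 * sin (x / 2) :=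
  calc sin x = 2 * sin (x / 2) * cos (x / 2) := by rw [← sin_two_mul]; ring_nf
    _ ≤ 2 * sin (x / 2) := mul_le_of_le_one_right (by positivity) (cos_le_one _)

namespace Complex

theorem re_mul_sin_add_abs_im_mul_cos (z : ℂ) (η : ℝ) :
    z.re * Real.sin η + |z.im| * Real.cos η = ‖z‖ * Real.sin (|z.arg| + η) := by
  rw [Real.sin_add, ← norm_mul_cos_arg, ← norm_mul_sin_arg, abs_mul, abs_norm,
    abs_sin_eq_sin_abs_of_abs_le_pi (abs_arg_le_pi z), ← Real.cos_abs z.arg]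
  ring

theorem abs_arg_lt_of_norm_mul_sin_pos {z : ℂ} {η : ℝ} (hη : η ≤ π)
    (h : 0 < ‖z‖ * Real.sin (|z.arg| + η)) : |z.arg| < π - η := by
  by_contra! hle
  have : Real.sin (|z.arg| + η) ≤ 0 := by
    rw [← Real.sin_sub_two_pi]
    exact Real.sin_nonpos_of_nonpos_of_neg_pi_le (by linarith [abs_arg_le_pi z]) (by linarith)
  nlinarith [norm_nonneg z]

theorem norm_mul_sin_half_le_norm_add_mul_sin {z w : ℂ} {δ : ℝ} (hδ : 0 ≤ δ)
    (hz : |z.arg| ≤ π - δ) (hw : |w.im| * Real.cos (δ / 2) ≤ w.re * Real.sin (δ / 2)) :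
    ‖z‖ * Real.sin (δ / 2) ≤ ‖z + w‖ * Real.sin (|(z + w).arg| + δ / 2) := by
  have hsin : ‖z‖ * Real.sin (δ / 2) ≤ ‖z‖ * Real.sin (|z.arg| + δ / 2) :=
    mul_le_mul_of_nonneg_left
      (Real.sin_le_sin_of_le_of_le_pi_sub (by linarith) (by linarith [abs_nonneg z.arg])
        (by linarith)) (norm_nonneg z)
  have hcos : 0 ≤ Real.cos (δ / 2) :=
    Real.cos_nonneg_of_neg_pi_div_two_le_of_le (by linarith [pi_pos])
      (by linarith [abs_nonneg z.arg])
  have him : |z.im| ≤ |(z + w).im| + |w.im| := by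
    simpa [add_im] using abs_sub (z.im + w.im) w.im
  rw [← re_mul_sin_add_abs_im_mul_cos] at hsin ⊢
  rw [add_re]
  nlinarith [mul_le_mul_of_nonneg_right him hcos]

theorem abs_im_sum_le {ι : Type*} (s : Finset ι) (f : ι → ℂ) (a : ℝ) {ρ : ℝ}
    (hf : ∀ i ∈ s, ‖f i - a‖ ≤ ρ) : |(∑ i ∈ s, f i).im| ≤ s.card * ρ := by
  rw [im_sum, ← nsmul_eq_mul]
  refine (Finset.abs_sum_le_sum_abs _ _).trans (Finset.sum_le_card_nsmul _ _ _ fun i hi => ?_)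
  calc |(f i).im| = |(f i - a).im| := by simp
    _ ≤ ρ := (abs_im_le_norm _).trans (hf i hi)


theorem abs_im_sum_mul_cos_le_re_sum_mul_sin {ι : Type*} (s : Finset ι) (f : ι → ℂ) {a ρ θ : ℝ}
    (hθ : 0 ≤ Real.sin θ) (hre : ∀ i ∈ s, a / 2 ≤ (f i).re) (hf : ∀ i ∈ s, ‖f i - a‖ ≤ ρ)
    (hρ : ρ ≤ a / 2 * Real.sin θ) :
    |(∑ i ∈ s, f i).im| * Real.cos θ ≤ (∑ i ∈ s, f i).re * Real.sin θ := by
  have hsum_re : s.card * (a / 2) ≤ (∑ i ∈ s, f i).re := by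
    rw [re_sum, ← nsmul_eq_mul]
    exact Finset.card_nsmul_le_sum _ _ _ hre
  calc |(∑ i ∈ s, f i).im| * Real.cos θ ≤ |(∑ i ∈ s, f i).im| :=
        mul_le_of_le_one_right (abs_nonneg _) (Real.cos_le_one _)
    _ ≤ s.card * ρ := abs_im_sum_le s f a hf
    _ ≤ s.card * (a / 2) * Real.sin θ := by rw [mul_assoc]; gcongr
    _ ≤ (∑ i ∈ s, f i).re * Real.sin θ := by gcongr

end Complex

theorem stmt_1 (δ a c₀ : ℝ) (hδ : δ ∈ Set.Ioo 0 (π / 2)) (ha : 0 < a) (hc₀ : 0 < c₀) :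
    ∃ ε₀ > 0, ∀ ε : ℝ, 0 < ε → ε ≤ ε₀ →
      ∀ g₀ : ℂ, ‖g₀‖ < ε → |g₀.arg| ≤ π - δ →
        ∀ aseq : ℕ → ℂ,
          (∀ n, a / 2 ≤ (aseq n).re) →
          (∀ n, ‖aseq n - (a : ℂ)‖ ≤ c₀ * ‖g₀‖) →
          ∀ n : ℕ, 1 ≤ n →
            ‖g₀ / (1 + g₀ * n * ((n : ℂ)⁻¹ * ∑ k ∈ Finset.range n, aseq k))‖ ≤
                2 * ε / Real.sin δ ∧
              |(g₀ / (1 + g₀ * n * ((n : ℂ)⁻¹ * ∑ k ∈ Finset.range n, aseq k))).arg| ≤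
                π - δ / 2 := by
  obtain ⟨hδ0, hδπ⟩ := hδ
  have hsin : 0 < Real.sin (δ / 2) := sin_pos_of_pos_of_lt_pi (by linarith) (by linarith)
  have hsinδ0 : 0 < Real.sin δ := sin_pos_of_pos_of_lt_pi hδ0 (by linarith)
  refine ⟨a * Real.sin (δ / 2) / (2 * c₀), by positivity, ?_⟩
  intro ε hε hεε₀ g₀ hg₀ hg₀arg aseq hre hnorm n hn
  set S := ∑ k ∈ Finset.range n, aseq k
  rcases eq_or_ne g₀ 0 with rfl | hg₀0
  · simp only [zero_div, norm_zero, arg_zero, abs_zero]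
    exact ⟨by positivity, by linarith⟩
  have hinv : g₀ / (1 + g₀ * n * ((n : ℂ)⁻¹ * S)) = (g₀⁻¹ + S)⁻¹ := by
    rw [mul_assoc, mul_inv_cancel_left₀ (by exact_mod_cast (by omega : n ≠ 0))]
    field_simp
  have hS : |S.im| * Real.cos (δ / 2) ≤ S.re * Real.sin (δ / 2) := by
    refine abs_im_sum_mul_cos_le_re_sum_mul_sin _ _ hsin.le (fun k _ => hre k)
      (fun k _ => hnorm k) ?_
    rw [le_div_iff₀ (by positivity)] at hεε₀
    nlinarith
  have hkey := norm_mul_sin_half_le_norm_add_mul_sin hδ0.le (by rwa [abs_arg_inv]) hS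
  have hg₀inv : 0 < ‖g₀⁻¹‖ * Real.sin (δ / 2) :=
    mul_pos (norm_pos_iff.2 (inv_ne_zero hg₀0)) hsin
  rw [hinv, norm_inv, abs_arg_inv]
  constructor
  · calc ‖g₀⁻¹ + S‖⁻¹ ≤ (‖g₀⁻¹‖ * Real.sin (δ / 2))⁻¹ :=
          inv_anti₀ hg₀inv
            (hkey.trans (mul_le_of_le_one_right (norm_nonneg _) (Real.sin_le_one _)))
      _ = ‖g₀‖ / Real.sin (δ / 2) := by rw [norm_inv]; field_simp
      _ ≤ ε / Real.sin (δ / 2) := by gcongr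
      _ ≤ 2 * ε / Real.sin δ := by
          rw [div_le_div_iff₀ hsin hsinδ0]
          nlinarith [Real.sin_le_two_mul_sin_half hsin.le]
  · exact (abs_arg_lt_of_norm_mul_sin_pos (by linarith) (hg₀inv.trans_le hkey)).le
end

section
/- Let δ ∈ (0, π/2). There exists ε₀(δ) > 0 such that: if |g₀| < ε ≤ ε₀, |Arg g₀| ≤ π − δ, and the sequence (g_n) satisfies the recursion g_{n+1} = g_n − a_n g_n² with a_n = a + σ_n, a > 0, |σ_n| ≤ c₀|g₀|, then for all n: (i) |g_n| ≤ 3ε/sin δ and |Arg g_n| ≤ π − δ/4, and (ii) |g_n − g̃_n| ≤ |g̃_n|^{3/2}, where g̃_n = g₀/(1 + g₀ n A_n), A_n = (1/n)Σ_{k<n} a_k. -/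
/-!
Pass to reciprocals: the recursion reads `1/g_{n+1} = 1/g_n + a_n + a_n² g_n / (1 - a_n g_n)`,
so `1/g_n = W_n + R_n` with `W_n = 1/g₀ + ∑_{k<n} a_k = 1/g̃_n`. Since `1/g₀` lies in the sector
`|arg| ≤ π - δ` and `∑ a_k` in a thin sector around the positive axis, the two cannot cancel:
`|W_n| ≥ m (1/ε + n a/2)` with `m = (5/12) sin δ`. As long as `|R_k| ≤ |W_k|/5` we have
`|g_k| ≤ 5/(4|W_k|)`, so `|R_n| ≲ ∑_{k<n} 1/(1/ε + k a/2) ≲ √(n ε / a)`, which for small `ε` is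
small against both `√|W_n|` and `n a`. This closes the induction and yields the bound on `|g_n|`
and `|g_n - g̃_n| ≤ |g̃_n|^{3/2}`; the argument bound holds because `R_n + ∑ a_k` still lies in a
thin sector around the positive axis, and adding such a vector maps the sector `|arg| ≤ π - δ`
into itself.
-/

open Real Complex Finset

lemma sum_range_inv_sqrt_succ_le (n : ℕ) : ∑ k ∈ range n, (√(k + 1))⁻¹ ≤ 2 * √n := by
  induction n with
  | zero => simp
  | succ n ih =>
    rw [sum_range_succ, Nat.cast_succ]
    have hpos : 0 < √((n : ℝ) + 1) := Real.sqrt_pos.2 (by positivity)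
    have hstep : (√((n : ℝ) + 1))⁻¹ ≤ 2 * √((n : ℝ) + 1) - 2 * √n := by
      rw [inv_le_iff_one_le_mul₀ hpos]
      nlinarith [Real.sq_sqrt (n.cast_nonneg : (0 : ℝ) ≤ n),
        Real.sq_sqrt (by positivity : (0 : ℝ) ≤ n + 1), sq_nonneg (√((n : ℝ) + 1) - √n)]
    linarith

lemma sq_sum_range_inv_add_le {a ε : ℝ} (ha : 0 < a) (hε : 0 < ε) (haε : a * ε ≤ 1) (n : ℕ) :
    (∑ k ∈ range n, (ε⁻¹ + k * a / 2)⁻¹) ^ 2 ≤ 4 * n * ε / a := by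
  set c := √(a / ε) with hc_def
  have hc : 0 < c := Real.sqrt_pos.2 (by positivity)
  have hterm : ∀ k : ℕ, (ε⁻¹ + k * a / 2)⁻¹ ≤ c⁻¹ * (√(k + 1))⁻¹ := by
    intro k
    rw [← mul_inv, hc_def, ← Real.sqrt_mul (by positivity)]
    refine inv_anti₀ (by positivity) (Real.sqrt_le_iff.2 ⟨by positivity, ?_⟩)
    have haε' : a ≤ ε⁻¹ := by rw [le_inv_comm₀ ha hε, inv_eq_one_div, le_div_iff₀ ha]; linarith
    -- `(ε⁻¹ + k a / 2)² - (k + 1) a ε⁻¹ = ε⁻¹ (ε⁻¹ - a) + (k a / 2)²`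
    rw [div_eq_mul_inv]
    nlinarith [sq_nonneg ((k : ℝ) * a / 2), mul_nonneg (inv_pos.2 hε).le (sub_nonneg.2 haε')]
  have hsum : ∑ k ∈ range n, (ε⁻¹ + k * a / 2)⁻¹ ≤ c⁻¹ * (2 * √n) := by
    calc ∑ k ∈ range n, (ε⁻¹ + k * a / 2)⁻¹ ≤ ∑ k ∈ range n, c⁻¹ * (√(k + 1))⁻¹ :=
          sum_le_sum fun k _ => hterm k
      _ ≤ c⁻¹ * (2 * √n) := by rw [← mul_sum]; gcongr; exact sum_range_inv_sqrt_succ_le n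
  calc (∑ k ∈ range n, (ε⁻¹ + k * a / 2)⁻¹) ^ 2 ≤ (c⁻¹ * (2 * √n)) ^ 2 :=
        pow_le_pow_left₀ (sum_nonneg fun k _ => by positivity) hsum 2
    _ = 4 * n * ε / a := by
        rw [mul_pow, mul_pow, inv_pow, hc_def, Real.sq_sqrt (by positivity),
          Real.sq_sqrt n.cast_nonneg]
        field_simp; ring

lemma mul_norm_add_norm_le_norm_add {F : Type*} [NormedAddCommGroup F] [InnerProductSpace ℝ F]
    {x y : F} {c m : ℝ} (hc : -1 ≤ c) (hm2 : m ^ 2 ≤ (1 - c) / 2)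
    (h : -c * (‖x‖ * ‖y‖) ≤ inner ℝ x y) : m * (‖x‖ + ‖y‖) ≤ ‖x + y‖ := by
  refine le_of_sq_le_sq ?_ (norm_nonneg _)
  rw [norm_add_sq_real, mul_pow]
  nlinarith [mul_le_mul_of_nonneg_right hm2 (sq_nonneg (‖x‖ + ‖y‖)),
    mul_nonneg (by linarith : 0 ≤ 1 + c) (sq_nonneg (‖x‖ - ‖y‖))]

lemma mul_norm_add_norm_le_norm_add_of_abs_im_le {u v : ℂ} {γ m : ℝ} (hγ0 : 0 ≤ γ) (hγ1 : γ < 1)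
    (hm2 : m ^ 2 ≤ 3 * (1 - γ) / 8) (hu : -γ * ‖u‖ ≤ u.re)
    (hv : |v.im| ≤ (1 - γ) / 4 * v.re) : m * (‖u‖ + ‖v‖) ≤ ‖u + v‖ := by
  have hvre : 0 ≤ v.re := nonneg_of_mul_nonneg_right ((abs_nonneg _).trans hv) (by linarith)
  refine mul_norm_add_norm_le_norm_add (c := γ + (1 - γ) / 4) (by linarith) (by linarith) ?_
  have hre : -γ * ‖u‖ * v.re ≤ u.re * v.re := mul_le_mul_of_nonneg_right hu hvre
  have him : -(‖u‖ * |v.im|) ≤ u.im * v.im := by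
    have := mul_le_mul_of_nonneg_right (abs_im_le_norm u) (abs_nonneg v.im)
    rw [← abs_mul] at this
    linarith [neg_abs_le (u.im * v.im)]
  have hnorm : v.re ≤ ‖v‖ := re_le_norm v
  rw [Complex.inner, mul_re, conj_re, conj_im]
  nlinarith [mul_le_mul_of_nonneg_left hv (norm_nonneg u),
    mul_le_mul_of_nonneg_left hnorm (norm_nonneg u)]

lemma neg_mul_norm_le_re_add {u v : ℂ} {γ : ℝ} (hγ : 0 ≤ γ) (hu : -γ * ‖u‖ ≤ u.re)
    (hv : γ * ‖v‖ ≤ v.re) : -γ * ‖u + v‖ ≤ (u + v).re := by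
  have : ‖u‖ ≤ ‖u + v‖ + ‖v‖ := by simpa using norm_sub_le (u + v) v
  rw [add_re]
  nlinarith [mul_le_mul_of_nonneg_left this hγ]

lemma sub_norm_sub_le_re (v : ℂ) (t : ℝ) : t - ‖v - t‖ ≤ v.re := by
  have := neg_abs_le (v - t).re
  have := abs_re_le_norm (v - t)
  rw [sub_re, ofReal_re] at *
  linarith

lemma mul_norm_le_re_of_norm_sub_le {v : ℂ} {γ t : ℝ} (hγ0 : 0 ≤ γ) (ht : 0 ≤ t)
    (hv : ‖v - t‖ ≤ (1 - γ) / 2 * t) : γ * ‖v‖ ≤ v.re := by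
  have hnorm : ‖v‖ ≤ ‖v - t‖ + t := by simpa [abs_of_nonneg ht] using norm_le_norm_sub_add v t
  have hre := sub_norm_sub_le_re v t
  nlinarith [mul_le_mul_of_nonneg_left hnorm hγ0, mul_nonneg ht (sq_nonneg (1 - γ))]

lemma mul_norm_add_le_norm_add_of_norm_sub_le {u v : ℂ} {γ m t : ℝ} (hγ0 : 0 ≤ γ) (hγ1 : γ < 1)
    (hm : 0 ≤ m) (hm2 : m ^ 2 ≤ 3 * (1 - γ) / 8) (hu : -γ * ‖u‖ ≤ u.re) (ht : 0 ≤ t)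
    (hv : ‖v - t‖ ≤ (1 - γ) / 8 * t) : m * (‖u‖ + t / 2) ≤ ‖u + v‖ := by
  have him : |v.im| ≤ ‖v - t‖ := by simpa using abs_im_le_norm (v - t)
  have hre := sub_norm_sub_le_re v t
  have hv' : |v.im| ≤ (1 - γ) / 4 * v.re := by
    have : t * (7 + γ) / 8 ≤ v.re := by linarith
    nlinarith [mul_le_mul_of_nonneg_left this (by linarith : 0 ≤ (1 - γ) / 4),
      mul_nonneg (mul_nonneg (by linarith : 0 ≤ 1 - γ) ht) (by linarith : 0 ≤ 3 + γ)]
  refine le_trans ?_ (mul_norm_add_norm_le_norm_add_of_abs_im_le hγ0 hγ1 hm2 hu hv')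
  have := re_le_norm v
  gcongr
  nlinarith

lemma abs_arg_le_pi_sub_iff {δ : ℝ} (hδ0 : 0 ≤ δ) (hδπ : δ ≤ π) {z : ℂ} :
    |arg z| ≤ π - δ ↔ -Real.cos δ * ‖z‖ ≤ z.re := by
  rcases eq_or_ne z 0 with rfl | hz
  · simpa using hδπ
  rw [← Real.cos_pi_sub, ← strictAntiOn_cos.le_iff_ge ⟨by linarith, by linarith⟩
    ⟨abs_nonneg _, abs_arg_le_pi z⟩, Real.cos_abs, cos_arg hz, le_div_iff₀ (norm_pos_iff.2 hz)]

lemma abs_arg_add_le_of_norm_sub_le {δ t : ℝ} (hδ0 : 0 ≤ δ) (hδ : δ ≤ π / 2) {u v : ℂ}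
    (hu : |arg u| ≤ π - δ) (ht : 0 ≤ t) (hv : ‖v - t‖ ≤ (1 - Real.cos δ) / 2 * t) :
    |arg (u + v)| ≤ π - δ := by
  have hπ := pi_pos
  have hcos : 0 ≤ Real.cos δ := cos_nonneg_of_mem_Icc ⟨by linarith, hδ⟩
  rw [abs_arg_le_pi_sub_iff hδ0 (by linarith)] at hu ⊢
  exact neg_mul_norm_le_re_add hcos hu (mul_norm_le_re_of_norm_sub_le hcos ht hv)

lemma inv_sub_mul_sq {K : Type*} [Field K] {x b : K} (hx : x ≠ 0) (hbx : 1 - b * x ≠ 0) :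
    (x - b * x ^ 2)⁻¹ = x⁻¹ + b + b ^ 2 * x * (1 - b * x)⁻¹ := by
  rw [show x - b * x ^ 2 = x * (1 - b * x) by ring, mul_inv]
  linear_combination (x⁻¹ + b) * mul_inv_cancel₀ hbx + b * (1 - b * x)⁻¹ * mul_inv_cancel₀ hx

lemma norm_sq_mul_mul_inv_one_sub_le {𝕜 : Type*} [NormedField 𝕜] {b x : 𝕜}
    (h : ‖b * x‖ ≤ 1 / 2) :
    ‖b ^ 2 * x * (1 - b * x)⁻¹‖ ≤ 2 * ‖b‖ ^ 2 * ‖x‖ := by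
  have h1 : 1 / 2 ≤ ‖1 - b * x‖ := by
    have := norm_sub_norm_le (1 : 𝕜) (b * x)
    rw [norm_one] at this
    linarith
  rw [norm_mul, norm_mul, norm_pow, norm_inv]
  have h2 : ‖1 - b * x‖⁻¹ ≤ 2 := by
    rw [inv_le_comm₀ (by linarith) two_pos]; linarith
  calc ‖b‖ ^ 2 * ‖x‖ * ‖1 - b * x‖⁻¹ ≤ ‖b‖ ^ 2 * ‖x‖ * 2 := by gcongr
    _ = 2 * ‖b‖ ^ 2 * ‖x‖ := by ring

lemma norm_mul_norm_le_of_norm_inv_sub_le {𝕜 : Type*} [NormedField 𝕜] {x y : 𝕜}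
    (h : ‖x⁻¹ - y‖ ≤ ‖y‖ / 5) : ‖y‖ * ‖x‖ ≤ 5 / 4 := by
  rcases eq_or_ne x 0 with rfl | hx
  · simp only [norm_zero, mul_zero]; norm_num
  have hlow : 4 / 5 * ‖y‖ ≤ ‖x⁻¹‖ := by
    have := norm_sub_norm_le y (y - x⁻¹)
    rw [sub_sub_cancel, norm_sub_rev] at this
    linarith
  have hx' : ‖x⁻¹‖ * ‖x‖ = 1 := by rw [← norm_mul, inv_mul_cancel₀ hx, norm_one]
  nlinarith [norm_nonneg x]

lemma le_div_five_of_mul_sq_le {r t : ℝ} (h : 25 * r ^ 2 ≤ 16 * t) (ht : 16 ≤ t) :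
    r ≤ t / 5 := by
  nlinarith

lemma rpow_three_halves_eq_sqrt {t : ℝ} (ht : 0 ≤ t) : t ^ (3 / 2 : ℝ) = √(t ^ 3) := by
  rw [Real.sqrt_eq_rpow, ← Real.rpow_natCast, ← Real.rpow_mul ht]
  norm_num

lemma norm_sub_inv_le_rpow {𝕜 : Type*} [NormedField 𝕜] {x y : 𝕜} (hx : x ≠ 0)
    (h : 25 * ‖x⁻¹ - y‖ ^ 2 ≤ 16 * ‖y‖) (hy : 16 ≤ ‖y‖) :
    ‖x - y⁻¹‖ ≤ ‖y⁻¹‖ ^ (3 / 2 : ℝ) := by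
  have hy0 : y ≠ 0 := norm_pos_iff.1 (by linarith)
  have hxy := norm_mul_norm_le_of_norm_inv_sub_le (le_div_five_of_mul_sq_le h hy)
  have hdiff : x - y⁻¹ = x * y⁻¹ * (y - x⁻¹) := by field_simp
  rw [rpow_three_halves_eq_sqrt (norm_nonneg _), Real.le_sqrt (norm_nonneg _) (by positivity),
    hdiff, norm_mul, norm_mul, norm_sub_rev, norm_inv]
  have hq : 0 < ‖y‖ := by linarith
  calc (‖x‖ * ‖y‖⁻¹ * ‖x⁻¹ - y‖) ^ 2 = (‖y‖ * ‖x‖) ^ 2 * ‖x⁻¹ - y‖ ^ 2 * ‖y‖⁻¹ ^ 4 := by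
        field_simp
    _ ≤ (5 / 4) ^ 2 * (16 / 25 * ‖y‖) * ‖y‖⁻¹ ^ 4 := by
        gcongr
        linarith
    _ = ‖y‖⁻¹ ^ 3 := by
        field_simp
        ring

theorem norm_inv_sub_le_sum_of_riccati {𝕜 : Type*} [NormedField 𝕜] {b W g : ℕ → 𝕜} {d : ℕ → ℝ}
    {K : ℝ} (hg : ∀ n, g (n + 1) = g n - b n * g n ^ 2) (hg0 : g 0 ≠ 0)
    (hW : ∀ n, W (n + 1) = W n + b n) (hW0 : W 0 = (g 0)⁻¹) (hK : 0 < K) (hb : ∀ n, ‖b n‖ ≤ K)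
    (hWK : ∀ n, 5 / 2 * K ≤ ‖W n‖) (hd : ∀ n, 5 / 2 * K ^ 2 / ‖W n‖ ≤ d n)
    (hsum : ∀ n, ∑ k ∈ range n, d k ≤ ‖W n‖ / 5) (n : ℕ) :
    g n ≠ 0 ∧ ‖(g n)⁻¹ - W n‖ ≤ ∑ k ∈ range n, d k := by
  induction n with
  | zero => simp [hg0, hW0]
  | succ n ih =>
    obtain ⟨hgn, hR⟩ := ih
    have hWpos : 0 < ‖W n‖ := by linarith [hWK n]
    have hWg : ‖W n‖ * ‖g n‖ ≤ 5 / 4 := norm_mul_norm_le_of_norm_inv_sub_le (hR.trans (hsum n))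
    have hKg : K * ‖g n‖ ≤ 1 / 2 := by nlinarith [hWK n, norm_nonneg (g n)]
    have hbg : ‖b n * g n‖ ≤ 1 / 2 := by
      rw [norm_mul]
      exact (mul_le_mul_of_nonneg_right (hb n) (norm_nonneg _)).trans hKg
    have hbg1 : 1 - b n * g n ≠ 0 := by
      intro h
      rw [← sub_eq_zero.1 h, norm_one] at hbg
      norm_num at hbg
    have hrem : ‖b n ^ 2 * g n * (1 - b n * g n)⁻¹‖ ≤ d n := by
      refine (norm_sq_mul_mul_inv_one_sub_le hbg).trans
        ((?_ : _ ≤ 5 / 2 * K ^ 2 / ‖W n‖).trans (hd n))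
      rw [le_div_iff₀ hWpos]
      have := pow_le_pow_left₀ (norm_nonneg _) (hb n) 2
      nlinarith [norm_nonneg (g n)]
    rw [hg n, sum_range_succ]
    refine ⟨?_, ?_⟩
    · rw [show g n - b n * g n ^ 2 = g n * (1 - b n * g n) by ring]
      exact mul_ne_zero hgn hbg1
    · rw [inv_sub_mul_sq hgn hbg1, hW n,
        show (g n)⁻¹ + b n + b n ^ 2 * g n * (1 - b n * g n)⁻¹ - (W n + b n)
          = ((g n)⁻¹ - W n) + b n ^ 2 * g n * (1 - b n * g n)⁻¹ by ring]
      exact norm_add_le_of_le hR hrem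

lemma div_one_add_mul_mul_inv_sum {K : Type*} [Field K] [CharZero K] {x : K} (hx : x ≠ 0)
    (f : ℕ → K) (n : ℕ) :
    x / (1 + x * n * ((n : K)⁻¹ * ∑ k ∈ range n, f k)) = (x⁻¹ + ∑ k ∈ range n, f k)⁻¹ := by
  rcases Nat.eq_zero_or_pos n with rfl | hn
  · simp
  have : (n : K) ≠ 0 := Nat.cast_ne_zero.2 hn.ne'
  field_simp

lemma norm_sum_add_sub_le {a η : ℝ} {σ : ℕ → ℂ} (hσ : ∀ k, ‖σ k‖ ≤ η) (n : ℕ) :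
    ‖∑ k ∈ range n, ((a : ℂ) + σ k) - ((n * a : ℝ) : ℂ)‖ ≤ n * η := by
  rw [sum_add_distrib, sum_const, card_range, nsmul_eq_mul, ofReal_mul, ofReal_natCast,
    add_sub_cancel_left]
  simpa using norm_sum_le_of_le (range n) (fun k _ => hσ k)

lemma mul_le_norm_inv_add_sum {δ a m ε η : ℝ} (hδ : δ ∈ Set.Ioo 0 (π / 2)) (ha : 0 < a)
    (hm : 0 ≤ m) (hm2 : m ^ 2 ≤ 3 * (1 - Real.cos δ) / 8) (hη : 8 * η ≤ a * (1 - Real.cos δ))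
    {g₀ : ℂ} (hg₀ : ‖g₀‖ ≤ ε) (hg₀0 : g₀ ≠ 0) (hg₀arg : |g₀.arg| ≤ π - δ)
    {σ : ℕ → ℂ} (hσ : ∀ k, ‖σ k‖ ≤ η) (n : ℕ) :
    m * (ε⁻¹ + n * a / 2) ≤ ‖g₀⁻¹ + ∑ k ∈ range n, ((a : ℂ) + σ k)‖ := by
  obtain ⟨hδ0, hδ⟩ := hδ
  have hcos0 : 0 < Real.cos δ := cos_pos_of_mem_Ioo ⟨by linarith, hδ⟩
  have hcos1 : Real.cos δ < 1 := by
    nlinarith [Real.sin_sq_add_cos_sq δ, Real.sin_pos_of_pos_of_lt_pi hδ0 (by linarith : δ < π)]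
  have hu : -Real.cos δ * ‖g₀⁻¹‖ ≤ g₀⁻¹.re :=
    (abs_arg_le_pi_sub_iff hδ0.le (by linarith)).1 (by rwa [abs_arg_inv])
  have hu_norm : ε⁻¹ ≤ ‖g₀⁻¹‖ := by
    rw [norm_inv]; exact inv_anti₀ (norm_pos_iff.2 hg₀0) hg₀
  have hS : ‖∑ k ∈ range n, ((a : ℂ) + σ k) - ((n * a : ℝ) : ℂ)‖
      ≤ (1 - Real.cos δ) / 8 * (n * a) :=
    (norm_sum_add_sub_le hσ n).trans (by nlinarith [(n.cast_nonneg : (0 : ℝ) ≤ n)])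
  refine le_trans ?_
    (mul_norm_add_le_norm_add_of_norm_sub_le hcos0.le hcos1 hm hm2 hu (by positivity) hS)
  gcongr

/-- The allowance `5/2 · K² / L_k` for the `k`-th increment of the error `1/g_k - W_k`, where
`K = 2a` bounds `|a_k|` and `L_k = m (1/ε + k a/2)` is the lower bound of `|W_k|`. -/
noncomputable def riccatiStepBound (a m ε : ℝ) (k : ℕ) : ℝ :=
  10 * a ^ 2 / m * (ε⁻¹ + k * a / 2)⁻¹

lemma sum_riccatiStepBound_le {a m ε : ℝ} (ha : 0 < a) (hm : 0 < m) (hε : 0 < ε) (n : ℕ) :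
    ∑ k ∈ range n, riccatiStepBound a m ε k ≤ n * (10 * a ^ 2 / m * ε) := by
  refine (sum_le_card_nsmul _ _ _ fun k _ => ?_).trans_eq (by rw [card_range, nsmul_eq_mul])
  rw [riccatiStepBound]
  gcongr
  rw [inv_le_comm₀ (by positivity) hε, le_add_iff_nonneg_right]
  positivity

lemma sq_sum_riccatiStepBound_le {a m ε : ℝ} (ha : 0 < a) (hm : 0 < m) (hε : 0 < ε)
    (haε : a * ε ≤ 1) (hεm : 1250 * a ^ 2 * ε ≤ m ^ 3) {n : ℕ} {L : ℝ}
    (hL : m * (ε⁻¹ + n * a / 2) ≤ L) :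
    25 * (∑ k ∈ range n, riccatiStepBound a m ε k) ^ 2 ≤ 16 * L := by
  have hn : (0 : ℝ) ≤ n := n.cast_nonneg
  simp only [riccatiStepBound, ← mul_sum, mul_pow]
  calc 25 * ((10 * a ^ 2 / m) ^ 2 * (∑ k ∈ range n, (ε⁻¹ + k * a / 2)⁻¹) ^ 2)
      ≤ 25 * ((10 * a ^ 2 / m) ^ 2 * (4 * n * ε / a)) := by
        gcongr; exact sq_sum_range_inv_add_le ha hε haε n
    _ = n * a / m ^ 2 * (10000 * a ^ 2 * ε) := by field_simp; ring
    _ ≤ n * a / m ^ 2 * (8 * m ^ 3) := mul_le_mul_of_nonneg_left (by linarith) (by positivity)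
    _ = 16 * (m * (n * a / 2)) := by field_simp; ring
    _ ≤ 16 * L := by
        gcongr
        exact le_trans (by gcongr; exact le_add_of_nonneg_left (by positivity)) hL

lemma le_mul_inv_add_of_mul_le {c m ε t : ℝ} (hm : 0 ≤ m) (hε : 0 < ε) (ht : 0 ≤ t)
    (h : c * ε ≤ m) : c ≤ m * (ε⁻¹ + t) := by
  calc c ≤ m * ε⁻¹ := by rw [← div_eq_mul_inv, le_div_iff₀ hε]; exact h
    _ ≤ m * (ε⁻¹ + t) := by gcongr; exact le_add_of_nonneg_right ht

theorem riccati_inv_error {a m ε : ℝ} {σ g W : ℕ → ℂ} (ha : 0 < a) (hm : 0 < m) (hm1 : m ≤ 1)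
    (hε : 0 < ε) (hεa : 5 * a * ε ≤ m) (hε16 : 16 * ε ≤ m) (hεm : 1250 * a ^ 2 * ε ≤ m ^ 3)
    (hσ : ∀ n, ‖σ n‖ ≤ a) (hg : ∀ n, g (n + 1) = g n - ((a : ℂ) + σ n) * g n ^ 2)
    (hg0 : g 0 ≠ 0) (hW : ∀ n, W (n + 1) = W n + ((a : ℂ) + σ n)) (hW0 : W 0 = (g 0)⁻¹)
    (hW_ge : ∀ n : ℕ, m * (ε⁻¹ + n * a / 2) ≤ ‖W n‖) (n : ℕ) :
    g n ≠ 0 ∧ ‖(g n)⁻¹ - W n‖ ≤ ∑ k ∈ range n, riccatiStepBound a m ε k := by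
  have hW_ge' : ∀ {c : ℝ}, c * ε ≤ m → ∀ n, c ≤ ‖W n‖ := fun h n =>
    (le_mul_inv_add_of_mul_le hm.le hε (by positivity) h).trans (hW_ge n)
  refine norm_inv_sub_le_sum_of_riccati hg hg0 hW hW0 (K := 2 * a) (by positivity) (fun n => ?_)
    (fun n => ?_) (fun n => ?_) (fun n => ?_) n
  · refine (norm_add_le _ _).trans ?_
    rw [norm_real, Real.norm_of_nonneg ha.le]
    linarith [hσ n]
  · exact hW_ge' (by linarith) n
  · calc 5 / 2 * (2 * a) ^ 2 / ‖W n‖ = 10 * a ^ 2 / ‖W n‖ := by ring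
      _ ≤ 10 * a ^ 2 / (m * (ε⁻¹ + n * a / 2)) :=
          div_le_div_of_nonneg_left (by positivity) (by positivity) (hW_ge n)
      _ = riccatiStepBound a m ε n := by
          rw [riccatiStepBound, div_mul_eq_div_div, div_eq_mul_inv (10 * a ^ 2 / m)]
  · refine le_div_five_of_mul_sq_le ?_ (hW_ge' hε16 n)
    exact sq_sum_riccatiStepBound_le ha hm hε (by linarith) hεm (hW_ge n)

theorem riccati_flow_estimates {δ a m ε η : ℝ} (hδ : δ ∈ Set.Ioo 0 (π / 2)) (ha : 0 < a)
    (hm : 0 < m) (hm2 : m ^ 2 ≤ 3 * (1 - Real.cos δ) / 8) (hm_sin : 5 * Real.sin δ ≤ 12 * m)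
    (hε : 0 < ε) (hη : 8 * η ≤ a * (1 - Real.cos δ)) (hεa : 5 * a * ε ≤ m) (hε16 : 16 * ε ≤ m)
    (hεm : 1250 * a ^ 2 * ε ≤ m ^ 3) (hεcone : 80 * a * ε ≤ 3 * (1 - Real.cos δ) * m)
    {g₀ : ℂ} (hg₀ : ‖g₀‖ ≤ ε) (hg₀0 : g₀ ≠ 0) (hg₀arg : |g₀.arg| ≤ π - δ)
    {σ g : ℕ → ℂ} (hσ : ∀ n, ‖σ n‖ ≤ η) (hg0 : g 0 = g₀)
    (hg : ∀ n, g (n + 1) = g n - ((a : ℂ) + σ n) * g n ^ 2) (n : ℕ) :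
    ‖g n‖ ≤ 3 * ε / Real.sin δ ∧ |(g n).arg| ≤ π - δ / 4 ∧
      ‖g n - (g₀⁻¹ + ∑ k ∈ range n, ((a : ℂ) + σ k))⁻¹‖ ≤
        ‖(g₀⁻¹ + ∑ k ∈ range n, ((a : ℂ) + σ k))⁻¹‖ ^ (3 / 2 : ℝ) := by
  have hπ := Real.pi_pos
  have hcos := Real.cos_nonneg_of_mem_Icc ⟨by linarith [hδ.1], hδ.2.le⟩
  have hsin := Real.sin_pos_of_pos_of_lt_pi hδ.1 (by linarith [hδ.2])
  set W : ℕ → ℂ := fun n => g₀⁻¹ + ∑ k ∈ range n, ((a : ℂ) + σ k) with hW_def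
  have hW_ge : ∀ n : ℕ, m * (ε⁻¹ + n * a / 2) ≤ ‖W n‖ :=
    mul_le_norm_inv_add_sum hδ ha hm.le hm2 hη hg₀ hg₀0 hg₀arg hσ
  have hW_ge' : ∀ {c : ℝ}, c * ε ≤ m → c ≤ ‖W n‖ := fun h =>
    (le_mul_inv_add_of_mul_le hm.le hε (by positivity) h).trans (hW_ge n)
  obtain ⟨hgn, hR⟩ := riccati_inv_error ha hm (by nlinarith) hε hεa hε16 hεm
    (fun k => (hσ k).trans (by nlinarith)) hg (hg0 ▸ hg₀0)
    (fun n => by simp only [hW_def, sum_range_succ]; ring) (by simp [hW_def, hg0]) hW_ge n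
  have hR_sq : 25 * ‖(g n)⁻¹ - W n‖ ^ 2 ≤ 16 * ‖W n‖ :=
    le_trans (by gcongr) (sq_sum_riccatiStepBound_le ha hm hε (by nlinarith) hεm (hW_ge n))
  have hW16 : 16 ≤ ‖W n‖ := hW_ge' hε16
  refine ⟨?_, ?_, norm_sub_inv_le_rpow hgn hR_sq hW16⟩
  · have hWg := norm_mul_norm_le_of_norm_inv_sub_le (le_div_five_of_mul_sq_le hR_sq hW16)
    have : m / ε * ‖g n‖ ≤ 5 / 4 :=
      (mul_le_mul_of_nonneg_right (hW_ge' (div_mul_cancel₀ m hε.ne').le) (norm_nonneg _)).trans hWg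
    rw [div_mul_eq_mul_div, div_le_iff₀ hε] at this
    rw [le_div_iff₀ hsin]
    nlinarith [mul_le_mul_of_nonneg_left hm_sin (norm_nonneg (g n))]
  · have hv : ‖((g n)⁻¹ - g₀⁻¹) - ((n * a : ℝ) : ℂ)‖ ≤ (1 - Real.cos δ) / 2 * (n * a) := by
      rw [show (g n)⁻¹ - g₀⁻¹ - ((n * a : ℝ) : ℂ)
        = ((g n)⁻¹ - W n) + (∑ k ∈ range n, ((a : ℂ) + σ k) - ((n * a : ℝ) : ℂ)) by
          simp only [hW_def]; ring]
      refine (norm_add_le_of_le (hR.trans (sum_riccatiStepBound_le ha hm hε n))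
        (norm_sum_add_sub_le hσ n)).trans ?_
      have : 10 * a ^ 2 / m * ε ≤ 3 * a * (1 - Real.cos δ) / 8 := by
        rw [div_mul_eq_mul_div, div_le_iff₀ hm]; nlinarith
      nlinarith [(n.cast_nonneg : (0 : ℝ) ≤ n)]
    have := abs_arg_add_le_of_norm_sub_le hδ.1.le hδ.2.le (by rwa [abs_arg_inv]) (by positivity)
      hv
    rw [add_sub_cancel, abs_arg_inv] at this
    linarith [hδ.1]

theorem stmt_3 (δ a c₀ : ℝ) (hδ : δ ∈ Set.Ioo 0 (π / 2)) (ha : 0 < a) (hc₀ : 0 < c₀) :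
    ∃ ε₀ > 0, ∀ ε : ℝ, 0 < ε → ε ≤ ε₀ →
      ∀ g₀ : ℂ, ‖g₀‖ < ε → |g₀.arg| ≤ π - δ →
        ∀ σ : ℕ → ℂ, (∀ n, ‖σ n‖ ≤ c₀ * ‖g₀‖) →
          ∀ g : ℕ → ℂ, g 0 = g₀ →
            (∀ n, g (n + 1) = g n - ((a : ℂ) + σ n) * g n ^ 2) →
            ∀ n : ℕ,
              ‖g n‖ ≤ 3 * ε / Real.sin δ ∧
              |(g n).arg| ≤ π - δ / 4 ∧
              ‖g n -
                  g₀ / (1 + g₀ * n * ((n : ℂ)⁻¹ * ∑ k ∈ Finset.range n, ((a : ℂ) + σ k)))‖ ≤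
                ‖g₀ / (1 + g₀ * n * ((n : ℂ)⁻¹ * ∑ k ∈ Finset.range n, ((a : ℂ) + σ k)))‖
                  ^ (3 / 2 : ℝ) := by
  have hsin : 0 < Real.sin δ := Real.sin_pos_of_pos_of_lt_pi hδ.1 (by linarith [hδ.2, pi_pos])
  set κ := 1 - Real.cos δ
  have hκ : 0 < κ := by nlinarith [Real.sin_sq_add_cos_sq δ, Real.cos_le_one δ]
  -- chosen so that `5 / (4 m) = 3 / sin δ`, the constant in the bound on `‖g n‖`
  set m := 5 * Real.sin δ / 12 with hm_def
  have hm : 0 < m := by positivity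
  have hm2 : m ^ 2 ≤ 3 * κ / 8 := by nlinarith [Real.sin_sq_add_cos_sq δ, Real.cos_le_one δ]
  refine ⟨min (a * κ / (8 * c₀)) (min (m / (5 * a)) (min (m / 16)
    (min (m ^ 3 / (1250 * a ^ 2)) (3 * κ * m / (80 * a))))), by positivity, ?_⟩
  intro ε hε hεε₀ g₀ hg₀ hg₀arg σ hσ g hg0 hg n
  simp only [le_min_iff] at hεε₀
  obtain ⟨h₁, h₂, h₃, h₄, h₅⟩ := hεε₀
  rcases eq_or_ne g₀ 0 with rfl | hg₀0
  · have hz : ∀ n, g n = 0 := fun n => by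
      induction n with
      | zero => exact hg0
      | succ n ih => rw [hg, ih]; ring
    simp only [hz, norm_zero, arg_zero, abs_zero, zero_div, sub_zero, Real.zero_rpow_nonneg,
      and_true]
    exact ⟨by positivity, by linarith [hδ.2, pi_pos]⟩
  rw [div_one_add_mul_mul_inv_sum hg₀0]
  exact riccati_flow_estimates hδ ha hm hm2 (by linarith) hε (η := c₀ * ε)
    (by linarith [(le_div_iff₀ (by positivity)).1 h₁])
    (by linarith [(le_div_iff₀ (by positivity)).1 h₂])
    (by linarith [(le_div_iff₀ (by positivity)).1 h₃])
    (by linarith [(le_div_iff₀ (by positivity)).1 h₄])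
    (by linarith [(le_div_iff₀ (by positivity)).1 h₅])
    hg₀.le hg₀0 hg₀arg (fun k => (hσ k).trans (by gcongr)) hg0 hg n
end

section
/- Let g₀ > 0 be small, a > 0, and suppose a(s) = a + λ r(s) with |r(s)| ≤ C and λ > 0 small. Define I_n = ∫₀ⁿ ds · g₀ / (1 + g₀ ∫₀ˢ a(t) dt). Then |I_n − (1/a)·log(1 + a g₀ n)| ≤ (4Cλ/a²)·log(1 + a g₀ n) for all n ≥ 1 (assuming 2Cλ ≤ a/2 so that a(s) ≥ a/2). -/
/-!
Write `A s = ∫₀ˢ α` for the integrated coupling. If `|α - a| ≤ δ < a`, then `|A s - a s| ≤ δ s`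
and `A s ≥ (a - δ) s`, so pointwise
`|g₀/(1 + g₀ A s) - g₀/(1 + a g₀ s)| = g₀² |A s - a s| / ((1 + g₀ A s)(1 + a g₀ s))`
is at most `δ/(a - δ)` times the unperturbed integrand `g₀/(1 + a g₀ s)`, whose integral over
`[0, T]` is `log (1 + a g₀ T) / a`. With `δ = C λ ≤ a/4` the factor `δ/(a - δ)` is below `4 C λ / a`.
-/

open Real MeasureTheory intervalIntegral

lemma abs_integral_sub_mul_le {α : ℝ → ℝ} {a δ s : ℝ} (hα : IntervalIntegrable α volume 0 s)
    (hαa : ∀ t, |α t - a| ≤ δ) (hs : 0 ≤ s) :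
    |(∫ t in (0:ℝ)..s, α t) - a * s| ≤ δ * s := by
  have hsub : (∫ t in (0:ℝ)..s, α t) - a * s = ∫ t in (0:ℝ)..s, (α t - a) := by
    simp [integral_sub hα intervalIntegrable_const, mul_comm]
  simpa [hsub, abs_of_nonneg hs] using norm_integral_le_of_norm_le_const (a := 0) (b := s)
    (f := fun t => α t - a) fun t _ => hαa t

lemma integral_inv_one_add_mul {c T : ℝ} (hc : 0 < c) (hT : 0 ≤ T) :
    ∫ s in (0:ℝ)..T, (1 + c * s)⁻¹ = log (1 + c * T) / c := by
  rw [integral_comp_add_mul (fun x => x⁻¹) hc.ne', integral_inv_of_pos (by simp)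
    (by positivity)]
  simp [div_eq_inv_mul]

lemma abs_div_one_add_sub_div_one_add_le {g₀ a δ s A : ℝ} (hg₀ : 0 < g₀) (hδ : 0 ≤ δ)
    (hδa : δ < a) (hs : 0 ≤ s) (hA : |A - a * s| ≤ δ * s) :
    |g₀ / (1 + g₀ * A) - g₀ / (1 + a * g₀ * s)| ≤ δ / (a - δ) * (g₀ / (1 + a * g₀ * s)) := by
  have hAlow : (a - δ) * s ≤ A := by linarith [(abs_le.1 hA).1]
  have hD₁ : 0 < 1 + g₀ * A := by nlinarith [mul_nonneg (sub_pos.2 hδa).le hs]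
  have hD₂ : 0 < 1 + a * g₀ * s := by have := hδ.trans_lt hδa; positivity
  have hratio : g₀ * s / (1 + g₀ * A) ≤ 1 / (a - δ) := by
    rw [div_le_div_iff₀ hD₁ (sub_pos.2 hδa)]
    nlinarith [mul_le_mul_of_nonneg_left hAlow hg₀.le]
  calc |g₀ / (1 + g₀ * A) - g₀ / (1 + a * g₀ * s)|
      = |A - a * s| * (g₀ / (1 + g₀ * A)) * (g₀ / (1 + a * g₀ * s)) := by
        rw [show g₀ / (1 + g₀ * A) - g₀ / (1 + a * g₀ * s)
            = (a * s - A) * (g₀ / (1 + g₀ * A)) * (g₀ / (1 + a * g₀ * s)) by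
              rw [div_sub_div _ _ hD₁.ne' hD₂.ne', mul_assoc (a * s - A), div_mul_div_comm,
                ← mul_div_assoc]; ring,
          abs_mul, abs_mul, abs_sub_comm, abs_of_pos (div_pos hg₀ hD₁),
          abs_of_pos (div_pos hg₀ hD₂)]
    _ ≤ δ * s * (g₀ / (1 + g₀ * A)) * (g₀ / (1 + a * g₀ * s)) := by gcongr
    _ = δ * (g₀ * s / (1 + g₀ * A)) * (g₀ / (1 + a * g₀ * s)) := by ring
    _ ≤ δ * (1 / (a - δ)) * (g₀ / (1 + a * g₀ * s)) := by gcongr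
    _ = δ / (a - δ) * (g₀ / (1 + a * g₀ * s)) := by ring

theorem abs_integral_div_one_add_primitive_sub_log_le {α : ℝ → ℝ} {a δ g₀ T : ℝ}
    (hα : ∀ x y, IntervalIntegrable α volume x y) (hαa : ∀ t, |α t - a| ≤ δ) (hδa : δ < a)
    (hg₀ : 0 < g₀) (hT : 0 ≤ T) :
    |(∫ s in (0:ℝ)..T, g₀ / (1 + g₀ * ∫ t in (0:ℝ)..s, α t)) - 1 / a * log (1 + a * g₀ * T)| ≤
      δ / (a - δ) * (1 / a * log (1 + a * g₀ * T)) := by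
  set A : ℝ → ℝ := fun s => ∫ t in (0:ℝ)..s, α t
  have hδ : 0 ≤ δ := (abs_nonneg _).trans (hαa 0)
  have ha : 0 < a := hδ.trans_lt hδa
  have hA : ∀ s, 0 ≤ s → |A s - a * s| ≤ δ * s := fun s => abs_integral_sub_mul_le (hα 0 s) hαa
  have hg_int : ∫ s in (0:ℝ)..T, g₀ / (1 + a * g₀ * s) = 1 / a * log (1 + a * g₀ * T) := by
    simp only [div_eq_mul_inv g₀]
    rw [intervalIntegral.integral_const_mul, integral_inv_one_add_mul (mul_pos ha hg₀) hT]
    field_simp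
  have hg : IntervalIntegrable (fun s => g₀ / (1 + a * g₀ * s)) volume 0 T := by
    refine ContinuousOn.intervalIntegrable (continuousOn_const.div (by fun_prop) ?_)
    intro s hs
    rw [Set.uIcc_of_le hT] at hs
    have := hs.1
    positivity
  have hf : IntervalIntegrable (fun s => g₀ / (1 + g₀ * A s)) volume 0 T := by
    refine ContinuousOn.intervalIntegrable (continuousOn_const.div ?_ ?_)
    · exact (continuous_const.add (continuous_const.mul (continuous_primitive hα 0))).continuousOn
    · intro s hs
      rw [Set.uIcc_of_le hT] at hs
      nlinarith [(abs_le.1 (hA s hs.1)).1, mul_nonneg (sub_pos.2 hδa).le hs.1]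
  rw [← hg_int, ← integral_sub hf hg, ← intervalIntegral.integral_const_mul, ← Real.norm_eq_abs]
  refine norm_integral_le_of_norm_le hT (Filter.Eventually.of_forall fun s hs => ?_)
    (hg.const_mul _)
  exact abs_div_one_add_sub_div_one_add_le hg₀ hδ hδa hs.1.le (hA s hs.1.le)

theorem stmt_4_general (a C lam g₀ : ℝ) (ha : 0 < a) (hlam : 0 < lam) (hg₀ : 0 < g₀)
    (hsmall : 2 * C * lam ≤ a / 2)
    (r : ℝ → ℝ) (hr : Measurable r) (hrC : ∀ s, |r s| ≤ C)
    (n : ℕ) :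
    |(∫ s in (0:ℝ)..(n:ℝ), g₀ / (1 + g₀ * ∫ t in (0:ℝ)..s, (a + lam * r t))) -
        (1 / a) * Real.log (1 + a * g₀ * n)| ≤
      (4 * C * lam / a ^ 2) * Real.log (1 + a * g₀ * n) := by
  have hC : 0 ≤ C := (abs_nonneg _).trans (hrC 0)
  have hr_int (x y : ℝ) : IntervalIntegrable r volume x y :=
    (intervalIntegrable_const (c := C)).mono_fun hr.aestronglyMeasurable.restrict
      (.of_forall fun t => (hrC t).trans (le_abs_self C))
  have hα_dev (t : ℝ) : |a + lam * r t - a| ≤ C * lam := by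
    rw [add_sub_cancel_left, abs_mul, abs_of_pos hlam, mul_comm C]
    exact mul_le_mul_of_nonneg_left (hrC t) hlam.le
  have hlog : 0 ≤ log (1 + a * g₀ * n) := log_nonneg (le_add_of_nonneg_right (by positivity))
  refine (abs_integral_div_one_add_primitive_sub_log_le
    (fun x y => intervalIntegrable_const.add ((hr_int x y).const_mul lam)) hα_dev
    (by nlinarith) hg₀ n.cast_nonneg).trans ?_
  rw [← mul_assoc]
  refine mul_le_mul_of_nonneg_right ?_ hlog
  rw [div_mul_div_comm, mul_one, div_le_div_iff₀ (by nlinarith) (by positivity)]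
  nlinarith [mul_nonneg (mul_nonneg (mul_nonneg hC hlam.le) ha.le)
    (show 0 ≤ 3 * a - 4 * (C * lam) by linarith)]

theorem stmt_4 (a C lam g₀ : ℝ) (ha : 0 < a) (hC : 0 < C) (hlam : 0 < lam) (hg₀ : 0 < g₀)
    (hsmall : 2 * C * lam ≤ a / 2)
    (r : ℝ → ℝ) (hr : Measurable r) (hrC : ∀ s, |r s| ≤ C)
    (n : ℕ) (hn : 1 ≤ n) :
    |(∫ s in (0:ℝ)..(n:ℝ), g₀ / (1 + g₀ * ∫ t in (0:ℝ)..s, (a + lam * r t))) -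
        (1 / a) * Real.log (1 + a * g₀ * n)| ≤
      (4 * C * lam / a ^ 2) * Real.log (1 + a * g₀ * n) :=
  stmt_4_general a C lam g₀ ha hlam hg₀ hsmall r hr hrC n
end

section
/- Let g₀ > 0, a > 0, and suppose I_n = (1/a + w̃_n)·log(1 + a g₀ n) where I_n = ∫₀ⁿ g₀/(1 + g₀∫₀ˢ a(t)dt) ds with a/2 ≤ a(t) ≤ 3a/2 and |w̃_n| ≤ Cλ for small λ. Then |w̃_{n+1} − w̃_n|·log(1 + a g₀ n) ≤ 4 g₀/(1 + a g₀ n) for all n ≥ 1, provided λ is small enough. -/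
/-!
Write `I_n = c_n L_n` with `c_n = 1/a + w̃_n` and `L_n = log (1 + a g₀ n)`. Then
`I_{n+1} - I_n = (c_{n+1} - c_n) L_n + c_{n+1} (L_{n+1} - L_n)`. The left side is the integral of
the integrand over `[n, n+1]`, which lies in `[0, 2 g₀ / (1 + a g₀ n)]` because `a(t) ≥ a/2`. The
second term on the right lies in the same interval, because `c_{n+1} ≤ 2/a` and
`L_{n+1} - L_n ≤ a g₀ / (1 + a g₀ n)`. Two numbers in `[0, B]` differ by at most `B`.
-/

open Real MeasureTheory intervalIntegral
open Filter Asymptotics Set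
open scoped Interval

theorem eventually_mul_log_add_lt {A B c d : ℝ} (hB : 0 < B) (hc : 0 < c) :
    ∀ᶠ x : ℝ in atTop, A * log (1 + B * x) + d < c * x := by
  have hlog : (fun x => log (1 + B * x)) =o[atTop] id :=
    (isLittleO_log_id_atTop.comp_tendsto
      (tendsto_atTop_add_const_left _ 1 (tendsto_id.const_mul_atTop hB))).trans_isBigO
      ((isLittleO_const_id_atTop 1).isBigO.add ((isBigO_refl _ _).const_mul_left B))
  have hsmall := ((hlog.const_mul_left A).add (isLittleO_const_id_atTop d)).bound (half_pos hc)
  filter_upwards [hsmall, eventually_gt_atTop 0] with x hx hx0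
  have := (le_abs_self _).trans hx
  simp only [Real.norm_eq_abs, id, abs_of_pos hx0] at this
  linarith [mul_pos hc hx0]

theorem log_add_sub_log_le {x y : ℝ} (hx : 0 < x) (hxy : 0 < x + y) :
    log (x + y) - log x ≤ y / x := by
  rw [← log_div hxy.ne' hx.ne']
  calc log ((x + y) / x) ≤ (x + y) / x - 1 := log_le_sub_one_of_pos (by positivity)
    _ = y / x := by field_simp; ring

theorem log_one_add_mul_natCast_pos {b : ℝ} {m : ℕ} (hb : 0 < b) (hm : 1 ≤ m) :
    0 < log (1 + b * m) := by
  have : (1 : ℝ) ≤ m := by exact_mod_cast hm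
  exact log_pos (by nlinarith)

theorem mul_le_integral_of_le {f : ℝ → ℝ} {a b c : ℝ} (hab : a ≤ b)
    (hf : IntervalIntegrable f volume a b) (h : ∀ t, c ≤ f t) :
    c * (b - a) ≤ ∫ t in a..b, f t := by
  simpa [mul_comm] using integral_mono_on hab intervalIntegrable_const hf (fun t _ => h t)

noncomputable def dampedRate (g₀ : ℝ) (aa : ℝ → ℝ) (s : ℝ) : ℝ :=
  g₀ / (1 + g₀ * ∫ t in (0 : ℝ)..s, aa t)

section DampedRate

variable {g₀ s : ℝ} {aa : ℝ → ℝ}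

theorem dampedRate_nonneg (hg : 0 ≤ g₀) (haa : ∀ t, 0 ≤ aa t) (hs : 0 ≤ s) :
    0 ≤ dampedRate g₀ aa s := by
  have := integral_nonneg (μ := volume) hs fun t _ => haa t
  unfold dampedRate
  positivity

theorem dampedRate_le {X : ℝ} (hg : 0 ≤ g₀) (hX : 0 ≤ X) (h : X ≤ ∫ t in (0 : ℝ)..s, aa t) :
    dampedRate g₀ aa s ≤ g₀ / (1 + g₀ * X) :=
  div_le_div_of_nonneg_left hg (by positivity) (by gcongr)

theorem dampedRate_of_not_intervalIntegrable (h : ¬IntervalIntegrable aa volume 0 s) :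
    dampedRate g₀ aa s = g₀ := by
  simp [dampedRate, integral_undef h]

end DampedRate

section Model

variable {a g₀ K : ℝ} {aa : ℝ → ℝ} {c : ℕ → ℝ}

theorem intervalIntegrable_dampedRate (ha : 0 < a) (hg : 0 < g₀) (hc : ∀ n, 0 < c n)
    (hI : ∀ n : ℕ, 1 ≤ n →
      ∫ s in (0 : ℝ)..n, dampedRate g₀ aa s = c n * log (1 + a * g₀ * n))
    {m : ℕ} (hm : 1 ≤ m) : IntervalIntegrable (dampedRate g₀ aa) volume 0 m := by
  refine intervalIntegrable_of_integral_ne_zero ?_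
  rw [hI m hm]
  exact (mul_pos (hc m) (log_one_add_mul_natCast_pos (mul_pos ha hg) hm)).ne'

/-- `aa` need not be measurable. If it were not integrable on `[0, s]`, the inner integral would
take the junk value `0` beyond `s`. Then `I_m` would grow linearly in `m`, which is impossible
when `I_m = c_m log (1 + a g₀ m)` with `c_m` bounded. -/
theorem intervalIntegrable_of_integral_dampedRate_eq (ha : 0 < a) (hg : 0 < g₀)
    (haa : ∀ t, 0 ≤ aa t) (hc : ∀ n, 0 < c n ∧ c n ≤ K)
    (hI : ∀ n : ℕ, 1 ≤ n →
      ∫ s in (0 : ℝ)..n, dampedRate g₀ aa s = c n * log (1 + a * g₀ * n))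
    {s : ℝ} (hs : 0 ≤ s) : IntervalIntegrable aa volume 0 s := by
  by_contra hs₀
  have hlinear : ∀ m : ℕ, 1 ≤ m → s ≤ m → g₀ * (m - s) ≤ K * log (1 + a * g₀ * m) := by
    intro m hm hsm
    have hconst : EqOn (dampedRate g₀ aa) (fun _ => g₀) (uIcc s m) := by
      intro t ht
      rw [uIcc_of_le hsm] at ht
      refine dampedRate_of_not_intervalIntegrable fun h => hs₀ (h.mono_set ?_)
      exact uIcc_subset_uIcc left_mem_uIcc (mem_uIcc_of_le hs ht.1)
    have hnonneg : 0 ≤ᵐ[volume.restrict (Ioc (0 : ℝ) m)] dampedRate g₀ aa :=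
      (ae_restrict_iff' measurableSet_Ioc).mpr <|
        ae_of_all _ fun t ht => dampedRate_nonneg hg.le haa ht.1.le
    calc g₀ * (m - s) = ∫ t in s..m, dampedRate g₀ aa t := by
          rw [integral_congr hconst, intervalIntegral.integral_const, smul_eq_mul, mul_comm]
      _ ≤ ∫ t in (0 : ℝ)..m, dampedRate g₀ aa t :=
          integral_mono_interval hs hsm le_rfl hnonneg
            (intervalIntegrable_dampedRate ha hg (fun n => (hc n).1) hI hm)
      _ = c m * log (1 + a * g₀ * m) := hI m hm
      _ ≤ K * log (1 + a * g₀ * m) :=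
          mul_le_mul_of_nonneg_right (hc m).2 (log_one_add_mul_natCast_pos (mul_pos ha hg) hm).le
  obtain ⟨m, hlt, hm⟩ := ((tendsto_natCast_atTop_atTop.eventually
    (eventually_mul_log_add_lt (A := K) (d := g₀ * s) (mul_pos ha hg) hg)).and
    (eventually_ge_atTop (max 1 ⌈s⌉₊))).exists
  have hsm : s ≤ m := (Nat.le_ceil s).trans (by exact_mod_cast le_of_max_le_right hm)
  linarith [hlinear m (le_of_max_le_left hm) hsm]

theorem integral_dampedRate_le {x : ℝ} (hg : 0 ≤ g₀) (ha : 0 ≤ a) (haa : ∀ t, a / 2 ≤ aa t)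
    (hx : 0 ≤ x) (hint : IntervalIntegrable aa volume 0 (x + 1)) :
    ∫ s in x..x + 1, dampedRate g₀ aa s ≤ 2 * g₀ / (1 + a * g₀ * x) := by
  have hbound : ∀ s ∈ Ι x (x + 1), ‖dampedRate g₀ aa s‖ ≤ g₀ / (1 + g₀ * (a / 2 * x)) := by
    intro s hs
    rw [uIoc_of_le (by linarith)] at hs
    have hs0 : 0 ≤ s := hx.trans hs.1.le
    have hprimitive : a / 2 * x ≤ ∫ t in (0 : ℝ)..s, aa t :=
      calc a / 2 * x ≤ a / 2 * (s - 0) := by gcongr; linarith [hs.1]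
        _ ≤ _ := mul_le_integral_of_le hs0
            (hint.mono_set (uIcc_subset_uIcc left_mem_uIcc (mem_uIcc_of_le hs0 hs.2))) haa
    rw [Real.norm_of_nonneg (dampedRate_nonneg hg (fun t => by linarith [haa t]) hs0)]
    exact dampedRate_le hg (by positivity) hprimitive
  calc ∫ s in x..x + 1, dampedRate g₀ aa s
      ≤ ‖∫ s in x..x + 1, dampedRate g₀ aa s‖ := Real.le_norm_self _
    _ ≤ g₀ / (1 + g₀ * (a / 2 * x)) * |x + 1 - x| := norm_integral_le_of_norm_le_const hbound
    _ ≤ 2 * g₀ / (1 + a * g₀ * x) := by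
        rw [add_sub_cancel_left, abs_one, mul_one, div_le_div_iff₀ (by positivity) (by positivity)]
        nlinarith [mul_nonneg hg ha, mul_nonneg (mul_nonneg hg ha) hx]

theorem abs_sub_mul_log_le (ha : 0 < a) (hg : 0 < g₀) (haa : ∀ t, a / 2 ≤ aa t)
    (hc : ∀ n, 0 < c n ∧ c n ≤ 2 / a)
    (hI : ∀ n : ℕ, 1 ≤ n →
      ∫ s in (0 : ℝ)..n, dampedRate g₀ aa s = c n * log (1 + a * g₀ * n))
    {n : ℕ} (hn : 1 ≤ n) :
    |c (n + 1) - c n| * log (1 + a * g₀ * n) ≤ 2 * g₀ / (1 + a * g₀ * n) := by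
  have haa₀ (t : ℝ) : 0 ≤ aa t := by linarith [haa t]
  have hintegrable {m : ℕ} (hm : 1 ≤ m) :=
    intervalIntegrable_dampedRate ha hg (fun m => (hc m).1) hI hm
  have hstep : ∫ s in (n : ℝ)..n + 1, dampedRate g₀ aa s =
      c (n + 1) * log (1 + a * g₀ * (n + 1 : ℕ)) - c n * log (1 + a * g₀ * n) := by
    rw [← hI n hn, ← hI (n + 1) (by omega),
      integral_interval_sub_left (hintegrable (m := n + 1) (by omega)) (hintegrable hn),
      Nat.cast_succ]
  set L : ℕ → ℝ := fun m => log (1 + a * g₀ * m) with hL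
  set D := ∫ s in (n : ℝ)..n + 1, dampedRate g₀ aa s
  have hD₀ : 0 ≤ D := integral_nonneg (by linarith) fun s hs =>
    dampedRate_nonneg hg.le haa₀ ((Nat.cast_nonneg n).trans hs.1)
  have hD : D ≤ 2 * g₀ / (1 + a * g₀ * n) := integral_dampedRate_le hg.le ha.le haa
    (by positivity) (intervalIntegrable_of_integral_dampedRate_eq ha hg haa₀ hc hI (by positivity))
  have hLmono : L n ≤ L (n + 1) := by
    simp only [hL, Nat.cast_succ]
    gcongr
    simp
  have hLincr : L (n + 1) - L n ≤ a * g₀ / (1 + a * g₀ * n) := by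
    simpa [hL, mul_add, add_assoc] using
      log_add_sub_log_le (x := 1 + a * g₀ * n) (y := a * g₀) (by positivity) (by positivity)
  have hcorrection : c (n + 1) * (L (n + 1) - L n) ≤ 2 * g₀ / (1 + a * g₀ * n) :=
    calc c (n + 1) * (L (n + 1) - L n) ≤ 2 / a * (a * g₀ / (1 + a * g₀ * n)) :=
          mul_le_mul (hc _).2 hLincr (by linarith) (by positivity)
      _ = 2 * g₀ / (1 + a * g₀ * n) := by field_simp
  have hdiff : (c (n + 1) - c n) * L n = D - c (n + 1) * (L (n + 1) - L n) := by
    rw [hstep]; ring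
  rw [← abs_of_pos (log_one_add_mul_natCast_pos (mul_pos ha hg) hn), ← abs_mul, hdiff]
  exact abs_sub_le_of_nonneg_of_le hD₀ hD (mul_nonneg (hc _).1.le (by linarith)) hcorrection

end Model

theorem stmt_5 (a C : ℝ) (ha : 0 < a) (hC : 0 < C) :
    ∃ lam₀ > 0, ∀ lam : ℝ, 0 < lam → lam ≤ lam₀ →
      ∀ g₀ : ℝ, 0 < g₀ →
        ∀ aa : ℝ → ℝ, (∀ t, a / 2 ≤ aa t ∧ aa t ≤ 3 * a / 2) →
          ∀ w : ℕ → ℝ, (∀ n, |w n| ≤ C * lam) →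
            (∀ n : ℕ, 1 ≤ n →
              (∫ s in (0:ℝ)..(n:ℝ), g₀ / (1 + g₀ * ∫ t in (0:ℝ)..s, aa t)) =
                (1 / a + w n) * Real.log (1 + a * g₀ * n)) →
            ∀ n : ℕ, 1 ≤ n →
              |w (n + 1) - w n| * Real.log (1 + a * g₀ * n) ≤
                4 * g₀ / (1 + a * g₀ * n) := by
  refine ⟨1 / (2 * a * C), by positivity, fun lam _ hlam g₀ hg aa haa w hw hI n hn => ?_⟩
  have hw' (m : ℕ) : |w m| ≤ 1 / a / 2 :=
    calc |w m| ≤ C * (1 / (2 * a * C)) := (hw m).trans (by gcongr)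
      _ = 1 / a / 2 := by field_simp
  have hc (m : ℕ) : 0 < 1 / a + w m ∧ 1 / a + w m ≤ 2 / a := by
    have := abs_le.mp (hw' m)
    have : 0 < 1 / a := by positivity
    have : 2 / a = 2 * (1 / a) := by ring
    constructor <;> linarith
  have h := abs_sub_mul_log_le ha hg (fun t => (haa t).1) hc hI hn
  rw [add_sub_add_left_eq_sub] at h
  exact h.trans (by gcongr; norm_num)
end

section
/- Let γ > 1, 0 < θ < θ' < 1, and c₀ > 0. Consider the Banach space B_θ of sequences ν = (ν_h)_{h ≤ 1} of complex numbers with norm ‖ν‖_θ = sup_{h≤1} γ^{−θh}|ν_h| < ∞. Suppose T : B_θ → B_θ is defined by T(ν)_h = −Σ_{j=h₀+1}^{h} γ^{−(h−j+1)} β_j(ν) (finite sum, h₀ ≤ h fixed) where the functions β_j satisfy |β_j(ν)| ≤ c₀ ε (Σ_{i=j}^{1} |ν_i| γ^{−θ'(i−j)} + γ^{θ' j}) for a parameter ε > 0. Then T maps the ball M_ξ = {ν : ‖ν‖_θ ≤ ξ·ε} into itself, provided ξ is large enough and ε small enough (depending on γ, θ, θ', c₀). -/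
open Real Complex

/-! With weights `w_h = γ ^ (θ h)`, the bound `|ν_i| ≤ ξ ε w_i` makes the tail sum in the bound
on `β_j` a geometric series of ratio `γ ^ (θ - θ')`, at most `ξ ε C₁ w_j` with
`C₁ = (1 - γ ^ (θ - θ'))⁻¹`, and `γ ^ (θ' j) ≤ γ ^ (θ' - θ) w_j` because `j ≤ 1`; hence
`|β_j| ≤ c₀ ε (ξ ε C₁ + γ ^ (θ' - θ)) w_j`. Summing against `γ ^ (-(h - j + 1))` is a second
geometric series, of ratio `γ ^ (-(1 + θ))`, so with `C₂ = γ⁻¹ (1 - γ ^ (-(1 + θ)))⁻¹` we get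
`|T(ν)_h| ≤ c₀ ε C₂ (ξ ε C₁ + γ ^ (θ' - θ)) w_h`. This is at most `ξ ε w_h` once
`ξ ≥ 2 c₀ C₂ γ ^ (θ' - θ)` and `ε ≤ (2 c₀ C₂ C₁)⁻¹`. -/

theorem sum_pow_le_inv_one_sub_of_injOn {ι : Type*} {s : Finset ι} {f : ι → ℕ}
    (hf : Set.InjOn f s) {r : ℝ} (h0 : 0 ≤ r) (h1 : r < 1) :
    ∑ i ∈ s, r ^ f i ≤ (1 - r)⁻¹ := by
  rw [← Finset.sum_image hf]
  exact sum_le_hasSum _ (fun n _ => pow_nonneg h0 n) (hasSum_geometric_of_lt_one h0 h1)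

theorem Real.rpow_neg_mul_intCast_eq_pow_toNat {γ : ℝ} (hγ : 0 ≤ γ) (s : ℝ) {n : ℤ}
    (hn : 0 ≤ n) : γ ^ (-(s * n)) = (γ ^ (-s)) ^ n.toNat := by
  have hcast : ((n.toNat : ℕ) : ℝ) = n := by exact_mod_cast Int.toNat_of_nonneg hn
  rw [← Real.rpow_natCast, ← Real.rpow_mul hγ, hcast, neg_mul]

section

variable {γ s : ℝ} (hγ : 1 < γ) (hs : 0 < s)
include hγ hs

theorem sum_Icc_rpow_neg_mul_sub_left_le (a b : ℤ) :
    ∑ i ∈ Finset.Icc a b, γ ^ (-(s * ((i : ℝ) - a))) ≤ (1 - γ ^ (-s))⁻¹ := by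
  calc ∑ i ∈ Finset.Icc a b, γ ^ (-(s * ((i : ℝ) - a)))
      = ∑ i ∈ Finset.Icc a b, (γ ^ (-s)) ^ (i - a).toNat := by
        refine Finset.sum_congr rfl fun i hi => ?_
        rw [← Real.rpow_neg_mul_intCast_eq_pow_toNat (by linarith) s
          (by linarith [(Finset.mem_Icc.mp hi).1]), Int.cast_sub]
    _ ≤ (1 - γ ^ (-s))⁻¹ :=
        sum_pow_le_inv_one_sub_of_injOn (fun i hi j hj hij => by
          simp only [Finset.coe_Icc, Set.mem_Icc] at hi hj; omega)
          (Real.rpow_nonneg (by linarith) _)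
          (Real.rpow_lt_one_of_one_lt_of_neg hγ (neg_neg_of_pos hs))

theorem sum_Icc_rpow_neg_mul_sub_right_le (a b : ℤ) :
    ∑ i ∈ Finset.Icc a b, γ ^ (-(s * ((b : ℝ) - i))) ≤ (1 - γ ^ (-s))⁻¹ := by
  calc ∑ i ∈ Finset.Icc a b, γ ^ (-(s * ((b : ℝ) - i)))
      = ∑ i ∈ Finset.Icc a b, (γ ^ (-s)) ^ (b - i).toNat := by
        refine Finset.sum_congr rfl fun i hi => ?_
        rw [← Real.rpow_neg_mul_intCast_eq_pow_toNat (by linarith) s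
          (by linarith [(Finset.mem_Icc.mp hi).2]), Int.cast_sub]
    _ ≤ (1 - γ ^ (-s))⁻¹ :=
        sum_pow_le_inv_one_sub_of_injOn (fun i hi j hj hij => by
          simp only [Finset.coe_Icc, Set.mem_Icc] at hi hj; omega)
          (Real.rpow_nonneg (by linarith) _)
          (Real.rpow_lt_one_of_one_lt_of_neg hγ (neg_neg_of_pos hs))

end

section

variable {γ θ : ℝ}

theorem Real.rpow_mul_le_rpow_sub_mul_rpow_mul (hγ : 1 ≤ γ) {θ' j : ℝ} (hθθ' : θ ≤ θ')
    (hj : j ≤ 1) : γ ^ (θ' * j) ≤ γ ^ (θ' - θ) * γ ^ (θ * j) := by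
  rw [← Real.rpow_add (by linarith)]
  exact Real.rpow_le_rpow_of_exponent_le hγ (by nlinarith)

theorem sum_Icc_norm_mul_rpow_le {E : Type*} [SeminormedAddCommGroup E] {ν : ℤ → E}
    {θ' M : ℝ} (hγ : 1 < γ) (hθθ' : θ < θ')
    (hν : ∀ i : ℤ, i ≤ 1 → ‖ν i‖ ≤ M * γ ^ (θ * (i : ℝ))) (j : ℤ) :
    ∑ i ∈ Finset.Icc j 1, ‖ν i‖ * γ ^ (-(θ' * ((i : ℝ) - j))) ≤
      M * (1 - γ ^ (-(θ' - θ)))⁻¹ * γ ^ (θ * (j : ℝ)) := by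
  have hγ0 : 0 < γ := by linarith
  have hM : 0 ≤ M :=
    (mul_nonneg_iff_of_pos_right (Real.rpow_pos_of_pos hγ0 _)).mp
      ((norm_nonneg _).trans (hν 1 le_rfl))
  calc ∑ i ∈ Finset.Icc j 1, ‖ν i‖ * γ ^ (-(θ' * ((i : ℝ) - j)))
      ≤ ∑ i ∈ Finset.Icc j 1, M * γ ^ (θ * (j : ℝ)) * γ ^ (-((θ' - θ) * ((i : ℝ) - j))) := by
        refine Finset.sum_le_sum fun i hi => ?_
        calc ‖ν i‖ * γ ^ (-(θ' * ((i : ℝ) - j)))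
            ≤ M * γ ^ (θ * (i : ℝ)) * γ ^ (-(θ' * ((i : ℝ) - j))) := by
              gcongr
              exact hν i (Finset.mem_Icc.mp hi).2
          _ = M * γ ^ (θ * (j : ℝ)) * γ ^ (-((θ' - θ) * ((i : ℝ) - j))) := by
              rw [mul_assoc, mul_assoc, ← Real.rpow_add hγ0, ← Real.rpow_add hγ0]
              ring_nf
    _ = M * γ ^ (θ * (j : ℝ)) * ∑ i ∈ Finset.Icc j 1, γ ^ (-((θ' - θ) * ((i : ℝ) - j))) := by
        rw [Finset.mul_sum]
    _ ≤ M * γ ^ (θ * (j : ℝ)) * (1 - γ ^ (-(θ' - θ)))⁻¹ := by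
        gcongr
        exact sum_Icc_rpow_neg_mul_sub_left_le hγ (by linarith) j 1
    _ = M * (1 - γ ^ (-(θ' - θ)))⁻¹ * γ ^ (θ * (j : ℝ)) := by ring

theorem norm_sum_Icc_rpow_mul_le {b : ℤ → ℂ} {A : ℝ} (hγ : 1 < γ) (hθ : -1 < θ) (hA : 0 ≤ A)
    {a h : ℤ} (hb : ∀ j ∈ Finset.Icc a h, ‖b j‖ ≤ A * γ ^ (θ * (j : ℝ))) :
    ‖∑ j ∈ Finset.Icc a h, ((γ ^ (-((h : ℝ) - j + 1)) : ℝ) : ℂ) * b j‖ ≤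
      A * (γ ^ (-1 : ℝ) * (1 - γ ^ (-(1 + θ)))⁻¹) * γ ^ (θ * (h : ℝ)) := by
  have hγ0 : 0 < γ := by linarith
  calc ‖∑ j ∈ Finset.Icc a h, ((γ ^ (-((h : ℝ) - j + 1)) : ℝ) : ℂ) * b j‖
      ≤ ∑ j ∈ Finset.Icc a h, ‖((γ ^ (-((h : ℝ) - j + 1)) : ℝ) : ℂ) * b j‖ := norm_sum_le _ _
    _ ≤ ∑ j ∈ Finset.Icc a h,
          A * γ ^ (-1 : ℝ) * γ ^ (θ * (h : ℝ)) * γ ^ (-((1 + θ) * ((h : ℝ) - j))) := by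
        refine Finset.sum_le_sum fun j hj => ?_
        rw [norm_mul, Complex.norm_real, Real.norm_of_nonneg (Real.rpow_nonneg hγ0.le _)]
        calc γ ^ (-((h : ℝ) - j + 1)) * ‖b j‖
            ≤ γ ^ (-((h : ℝ) - j + 1)) * (A * γ ^ (θ * (j : ℝ))) := by gcongr; exact hb j hj
          _ = A * γ ^ (-1 : ℝ) * γ ^ (θ * (h : ℝ)) * γ ^ (-((1 + θ) * ((h : ℝ) - j))) := by
              rw [mul_left_comm, mul_assoc, mul_assoc, ← Real.rpow_add hγ0,
                ← Real.rpow_add hγ0, ← Real.rpow_add hγ0]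
              ring_nf
    _ = A * γ ^ (-1 : ℝ) * γ ^ (θ * (h : ℝ)) *
          ∑ j ∈ Finset.Icc a h, γ ^ (-((1 + θ) * ((h : ℝ) - j))) := by
        rw [Finset.mul_sum]
    _ ≤ A * γ ^ (-1 : ℝ) * γ ^ (θ * (h : ℝ)) * (1 - γ ^ (-(1 + θ)))⁻¹ := by
        gcongr
        exact sum_Icc_rpow_neg_mul_sub_right_le hγ (by linarith) a h
    _ = A * (γ ^ (-1 : ℝ) * (1 - γ ^ (-(1 + θ)))⁻¹) * γ ^ (θ * (h : ℝ)) := by ring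

end

theorem stmt_6_general (γ θ θ' c₀ : ℝ) (hγ : 1 < γ) (hθ : 0 < θ) (hθθ' : θ < θ')
    (hc₀ : 0 < c₀) :
    ∃ ξ₀ > 0, ∃ ε₀ > 0, ∀ ξ : ℝ, ξ₀ ≤ ξ → ∀ ε : ℝ, 0 < ε → ε ≤ ε₀ →
      ∀ h₀ : ℤ, h₀ ≤ 1 →
        ∀ β : ℤ → (ℤ → ℂ) → ℂ, ∀ ν : ℤ → ℂ,
          (∀ h : ℤ, h ≤ 1 → Norm.norm (ν h) ≤ ξ * ε * γ ^ (θ * (h : ℝ))) →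
          (∀ j : ℤ, j ≤ 1 →
            Norm.norm (β j ν) ≤
              c₀ * ε *
                ((∑ i ∈ Finset.Icc j 1,
                    Norm.norm (ν i) * γ ^ (-(θ' * ((i : ℝ) - (j : ℝ))))) +
                  γ ^ (θ' * (j : ℝ)))) →
          ∀ h : ℤ, h₀ ≤ h → h ≤ 1 →
            Norm.norm
                (-(∑ j ∈ Finset.Icc (h₀ + 1) h,
                    ((γ ^ (-((h : ℝ) - (j : ℝ) + 1)) : ℝ) : ℂ) * β j ν)) ≤
              ξ * ε * γ ^ (θ * (h : ℝ)) := by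
  have hγ0 : 0 < γ := by linarith
  set C₁ := (1 - γ ^ (-(θ' - θ)))⁻¹
  set C₂ := γ ^ (-1 : ℝ) * (1 - γ ^ (-(1 + θ)))⁻¹
  set G := γ ^ (θ' - θ)
  have hC₁ : 0 < C₁ :=
    inv_pos.mpr (sub_pos.mpr (Real.rpow_lt_one_of_one_lt_of_neg hγ (by linarith)))
  have hC₂ : 0 < C₂ := mul_pos (Real.rpow_pos_of_pos hγ0 _)
    (inv_pos.mpr (sub_pos.mpr (Real.rpow_lt_one_of_one_lt_of_neg hγ (by linarith))))
  have hG : 0 < G := Real.rpow_pos_of_pos hγ0 _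
  refine ⟨2 * c₀ * C₂ * G, by positivity, (2 * c₀ * C₂ * C₁)⁻¹, by positivity, ?_⟩
  intro ξ hξ ε hε hεε₀ h₀ _ β ν hν hβ h _ hh1
  have hβν : ∀ j ∈ Finset.Icc (h₀ + 1) h,
      ‖β j ν‖ ≤ c₀ * ε * (ξ * ε * C₁ + G) * γ ^ (θ * (j : ℝ)) := fun j hj => by
    have hj1 : j ≤ 1 := (Finset.mem_Icc.mp hj).2.trans hh1
    calc ‖β j ν‖ ≤ _ := hβ j hj1
      _ ≤ c₀ * ε * (ξ * ε * C₁ * γ ^ (θ * (j : ℝ)) + G * γ ^ (θ * (j : ℝ))) := by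
          gcongr
          · exact sum_Icc_norm_mul_rpow_le hγ hθθ' hν j
          · exact Real.rpow_mul_le_rpow_sub_mul_rpow_mul hγ.le hθθ'.le (by exact_mod_cast hj1)
      _ = c₀ * ε * (ξ * ε * C₁ + G) * γ ^ (θ * (j : ℝ)) := by ring
  have hεC : c₀ * C₂ * C₁ * ε ≤ 1 / 2 := by
    have := mul_le_mul_of_nonneg_left hεε₀ (by positivity : (0 : ℝ) ≤ 2 * c₀ * C₂ * C₁)
    rw [mul_inv_cancel₀ (by positivity)] at this
    linarith
  have hξ0 : 0 < ξ := lt_of_lt_of_le (by positivity) hξ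
  rw [norm_neg]
  calc _ ≤ c₀ * ε * (ξ * ε * C₁ + G) * C₂ * γ ^ (θ * (h : ℝ)) :=
        norm_sum_Icc_rpow_mul_le hγ (by linarith) (by positivity) hβν
    _ = ε * (ξ * (c₀ * C₂ * C₁ * ε) + c₀ * C₂ * G) * γ ^ (θ * (h : ℝ)) := by ring
    _ ≤ ε * (ξ * (1 / 2) + ξ / 2) * γ ^ (θ * (h : ℝ)) := by
        gcongr
        linarith
    _ = ξ * ε * γ ^ (θ * (h : ℝ)) := by ring

theorem stmt_6 (γ θ θ' c₀ : ℝ) (hγ : 1 < γ) (hθ : 0 < θ) (hθθ' : θ < θ') (hθ' : θ' < 1)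
    (hc₀ : 0 < c₀) :
    ∃ ξ₀ > 0, ∃ ε₀ > 0, ∀ ξ : ℝ, ξ₀ ≤ ξ → ∀ ε : ℝ, 0 < ε → ε ≤ ε₀ →
      ∀ h₀ : ℤ, h₀ ≤ 1 →
        ∀ β : ℤ → (ℤ → ℂ) → ℂ, ∀ ν : ℤ → ℂ,
          (∀ h : ℤ, h ≤ 1 → Norm.norm (ν h) ≤ ξ * ε * γ ^ (θ * (h : ℝ))) →
          (∀ j : ℤ, j ≤ 1 →
            Norm.norm (β j ν) ≤
              c₀ * ε *
                ((∑ i ∈ Finset.Icc j 1,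
                    Norm.norm (ν i) * γ ^ (-(θ' * ((i : ℝ) - (j : ℝ))))) +
                  γ ^ (θ' * (j : ℝ)))) →
          ∀ h : ℤ, h₀ ≤ h → h ≤ 1 →
            Norm.norm
                (-(∑ j ∈ Finset.Icc (h₀ + 1) h,
                    ((γ ^ (-((h : ℝ) - (j : ℝ) + 1)) : ℝ) : ℂ) * β j ν)) ≤
              ξ * ε * γ ^ (θ * (h : ℝ)) :=
  stmt_6_general γ θ θ' c₀ hγ hθ hθθ' hc₀
end

section
/- Let β > 0, e ∈ ℝ, and let ĝ(k₀) = 1/(−ik₀ + e) for k₀ ∈ D_β = (2π/β)(ℤ + 1/2). Let χ₀ : ℝ → [0,1] be a smooth even function with χ₀(t) = 1 for |t| < 1 and χ₀(t) = 0 for |t| ≥ γ (γ > 1 fixed). Then for τ with 0 < |τ| ≤ β/2, lim_{M→∞} (1/β) Σ_{k₀ ∈ D_β} χ₀(γ^{−M}k₀) e^{−ik₀τ} ĝ(k₀) = (1/β) lim_{N→∞} Σ_{k₀ ∈ D_β, |k₀| ≤ N} e^{−ik₀τ} ĝ(k₀). -/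
open Real Complex Filter MeasureTheory

theorem stmt_9 (β e γ : ℝ) (hβ : 0 < β) (hγ : 1 < γ)
    (χ₀ : ℝ → ℝ) (hsmooth : ContDiff ℝ (⊤ : ℕ∞) χ₀) (heven : ∀ t, χ₀ (-t) = χ₀ t)
    (hrange : ∀ t, χ₀ t ∈ Set.Icc (0 : ℝ) 1)
    (hone : ∀ t, |t| < 1 → χ₀ t = 1) (hzero : ∀ t, γ ≤ |t| → χ₀ t = 0)
    (τ : ℝ) (hτ : 0 < |τ|) (hτβ : |τ| ≤ β / 2)
    (k : ℤ → ℝ) (hk : ∀ n : ℤ, k n = (2 * π / β) * ((n : ℝ) + 1 / 2))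
    (S : ℂ)
    (hsharp : Tendsto
      (fun N : ℕ => (1 / β : ℂ) * ∑' n : ℤ,
        if |k n| ≤ (N : ℝ) then
          Complex.exp (-Complex.I * (k n : ℂ) * (τ : ℂ)) / (-Complex.I * (k n : ℂ) + (e : ℂ))
        else 0)
      atTop (nhds S)) :
    Tendsto
      (fun M : ℕ => (1 / β : ℂ) * ∑' n : ℤ,
        ((χ₀ (γ ^ (-(M : ℝ)) * k n) : ℝ) : ℂ) *
          (Complex.exp (-Complex.I * (k n : ℂ) * (τ : ℂ)) /
            (-Complex.I * (k n : ℂ) + (e : ℂ))))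
      atTop (nhds S) := by
  have hβ0 : (β : ℂ) ≠ 0 := by exact_mod_cast hβ.ne'
  have hγ0 : (0:ℝ) < γ := lt_trans one_pos hγ
  set c : ℝ := 2 * π / β with hc_def
  have hc : 0 < c := by have := Real.pi_pos; positivity
  set f : ℤ → ℂ := fun n =>
    Complex.exp (-Complex.I * (k n : ℂ) * (τ : ℂ)) / (-Complex.I * (k n : ℂ) + (e : ℂ))
    with hf_def
  -- basic facts about k
  have habs2 : ∀ n : ℤ, (1:ℝ)/2 ≤ |(n:ℝ) + 1/2| := by
    intro n
    rcases le_or_gt 0 n with h | h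
    · have h' : (0:ℝ) ≤ (n:ℝ) := by exact_mod_cast h
      rw [_root_.abs_of_nonneg (by linarith)]; linarith
    · have h' : n ≤ -1 := by omega
      have h'' : (n:ℝ) ≤ -1 := by exact_mod_cast h'
      rw [_root_.abs_of_nonpos (by linarith)]; linarith
  have hkabs : ∀ n : ℤ, |k n| = c * |(n:ℝ) + 1/2| := by
    intro n; rw [hk n, abs_mul, _root_.abs_of_pos hc]
  have hkpos : ∀ n : ℤ, 0 < |k n| := by
    intro n; rw [hkabs n]; exact mul_pos hc (lt_of_lt_of_le (by norm_num) (habs2 n))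
  have hfnorm : ∀ n : ℤ, ‖f n‖ ≤ 1 / |k n| := by
    intro n
    rw [hf_def]
    simp only [norm_div]
    have hexp : ‖Complex.exp (-Complex.I * (k n:ℂ) * (τ:ℂ))‖ = 1 := by
      have h1 : -Complex.I * (k n:ℂ) * (τ:ℂ) = ((-(k n * τ) : ℝ) : ℂ) * Complex.I := by
        push_cast; ring
      rw [h1, Complex.norm_exp_ofReal_mul_I]
    rw [hexp]
    have hden : |k n| ≤ ‖-Complex.I * (k n:ℂ) + (e:ℂ)‖ := by
      have h1 := Complex.abs_im_le_norm (-Complex.I * (k n:ℂ) + (e:ℂ))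
      have h2 : (-Complex.I * (k n:ℂ) + (e:ℂ)).im = -(k n) := by simp
      rw [h2, abs_neg] at h1
      exact h1
    exact one_div_le_one_div_of_le (hkpos n) hden
  -- finite support
  have hsupp : ∀ (x : ℝ) (n : ℤ), |k n| ≤ x → n ∈ Finset.Icc (-(⌊x/c⌋+2)) ⌊x/c⌋ := by
    intro x n h
    rw [hkabs n] at h
    have h1 : |(n:ℝ)+1/2| ≤ x / c := by
      rw [mul_comm] at h
      exact (le_div_iff₀ hc).2 h
    rw [abs_le] at h1
    rw [Finset.mem_Icc]
    have hf1 : (⌊x/c⌋ : ℝ) ≤ x/c := Int.floor_le _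
    have hf2 : x/c - 1 < (⌊x/c⌋:ℝ) := Int.sub_one_lt_floor _
    constructor
    · have h3 : ((-(⌊x/c⌋+2) : ℤ) : ℝ) ≤ (n:ℝ) := by push_cast; linarith [h1.1]
      exact_mod_cast h3
    · exact Int.le_floor.2 (by linarith [h1.2])
  have hsumle : ∀ x : ℝ, Summable (fun n : ℤ => if |k n| ≤ x then f n else 0) := by
    intro x
    exact summable_of_ne_finset_zero (s := Finset.Icc (-(⌊x/c⌋+2)) ⌊x/c⌋)
      (fun n hn => if_neg (fun h => hn (hsupp x n h)))
  set Tle : ℝ → ℂ := fun x => ∑' n : ℤ, if |k n| ≤ x then f n else 0 with hTle_def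
  -- Step A
  have hA : Tendsto (fun N : ℕ => Tle (N:ℝ)) atTop (nhds ((β:ℂ) * S)) := by
    have h2 := hsharp.const_mul (β:ℂ)
    have h3 : (fun N : ℕ => (β:ℂ) * ((1/β : ℂ) * ∑' n : ℤ,
        if |k n| ≤ (N : ℝ) then
          Complex.exp (-Complex.I * (k n : ℂ) * (τ : ℂ)) / (-Complex.I * (k n : ℂ) + (e : ℂ))
        else 0)) = fun N : ℕ => Tle (N:ℝ) := by
      funext N
      simp only [hTle_def, hf_def, ← mul_assoc]
      rw [mul_one_div_cancel hβ0, one_mul]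
    rw [h3] at h2
    exact h2
  -- Step B
  have hB : Tendsto (fun x : ℝ => Tle x) atTop (nhds ((β:ℂ) * S)) := by
    have hfloor : Tendsto (fun x : ℝ => (⌊x⌋₊ : ℝ)) atTop atTop :=
      tendsto_natCast_atTop_atTop.comp tendsto_nat_floor_atTop
    have hB0 : Tendsto (fun x : ℝ => Tle (⌊x⌋₊ : ℝ)) atTop (nhds ((β:ℂ)*S)) := by
      have := hA.comp (tendsto_nat_floor_atTop (α := ℝ))
      exact this
    obtain ⟨d, hd_def⟩ : ∃ d : ℝ, d = 1/c + 3/2 := ⟨_, rfl⟩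
    obtain ⟨K, hK_def⟩ : ∃ K : ℝ, K = 2 * ((⌈d⌉).toNat : ℝ) := ⟨_, rfl⟩
    have hdiff : ∀ x : ℝ, 1 ≤ x → ‖Tle x - Tle (⌊x⌋₊:ℝ)‖ ≤ K / (⌊x⌋₊:ℝ) := by
      intro x hx
      set N : ℕ := ⌊x⌋₊ with hN_def
      have hN1 : 1 ≤ N := Nat.le_floor (by exact_mod_cast hx)
      have hN0 : (0:ℝ) < N := by exact_mod_cast hN1
      have hNx : (N:ℝ) ≤ x := Nat.floor_le (by linarith)
      have hxN : x < N + 1 := Nat.lt_floor_add_one x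
      set s : Finset ℤ := (Finset.Icc (-(⌊x/c⌋+2)) ⌊x/c⌋).filter (fun n => (N:ℝ) < |k n|)
        with hs_def
      have hstep1 : Tle x - Tle (N:ℝ) = ∑ n ∈ s,
          ((if |k n| ≤ x then f n else 0) - (if |k n| ≤ (N:ℝ) then f n else 0)) := by
        simp only [hTle_def]
        rw [← Summable.tsum_sub (hsumle x) (hsumle (N:ℝ))]
        apply tsum_eq_sum
        intro n hn
        by_cases h1 : |k n| ≤ (N:ℝ)
        · rw [if_pos (le_trans h1 hNx), if_pos h1, sub_self]
        · by_cases h2 : |k n| ≤ x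
          · exact absurd (show n ∈ s from Finset.mem_filter.2 ⟨hsupp x n h2, not_le.1 h1⟩) hn
          · rw [if_neg h2, if_neg h1, sub_self]
      -- card bound
      set t₁ : Finset ℤ := Finset.Ioc ⌊(N:ℝ)/c - 1/2⌋ ⌊(N:ℝ)/c + d - 1/2⌋ with ht1_def
      set t₂ : Finset ℤ := Finset.Ico ⌈-((N:ℝ)/c) - d - 1/2⌉ ⌈-((N:ℝ)/c) - 1/2⌉ with ht2_def
      have hsub : s ⊆ t₁ ∪ t₂ := by
        intro n hn
        obtain ⟨hmem, hgt⟩ := Finset.mem_filter.1 hn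
        rw [Finset.mem_Icc] at hmem
        have hf1 : (⌊x/c⌋:ℝ) ≤ x/c := Int.floor_le _
        have hxc : x/c ≤ (N:ℝ)/c + 1/c := by
          rw [← add_div]
          exact (div_le_div_iff_of_pos_right hc).2 (by linarith)
        have l1 : (n:ℝ) ≤ (⌊x/c⌋:ℝ) := by exact_mod_cast hmem.2
        have l2 : (-(⌊x/c⌋:ℝ)-2) ≤ (n:ℝ) := by
          have := hmem.1
          have h4 : ((-(⌊x/c⌋+2):ℤ):ℝ) ≤ (n:ℝ) := by exact_mod_cast this
          push_cast at h4
          linarith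
        have hup : |(n:ℝ)+1/2| ≤ (N:ℝ)/c + d := by
          rw [abs_le, hd_def]
          constructor <;> linarith
        have hlow : (N:ℝ)/c < |(n:ℝ)+1/2| := by
          rw [hkabs n] at hgt
          rw [div_lt_iff₀ hc]
          linarith [hgt]
        rcases le_or_gt 0 n with hn0 | hn0
        · have hn0' : (0:ℝ) ≤ (n:ℝ) := by exact_mod_cast hn0
          rw [_root_.abs_of_nonneg (by linarith)] at hup hlow
          apply Finset.mem_union_left
          rw [ht1_def, Finset.mem_Ioc]
          exact ⟨Int.floor_lt.2 (by push_cast; linarith),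
                 Int.le_floor.2 (by push_cast; linarith)⟩
        · have hn1 : n ≤ -1 := by omega
          have hn1' : (n:ℝ) ≤ -1 := by exact_mod_cast hn1
          rw [_root_.abs_of_nonpos (by linarith)] at hup hlow
          apply Finset.mem_union_right
          rw [ht2_def, Finset.mem_Ico]
          exact ⟨Int.ceil_le.2 (by push_cast; linarith),
                 Int.lt_ceil.2 (by push_cast; linarith)⟩
      have hcard : (s.card : ℝ) ≤ 2 * ((⌈d⌉).toNat : ℝ) := by
        have h1 : s.card ≤ t₁.card + t₂.card :=
          le_trans (Finset.card_le_card hsub) (Finset.card_union_le _ _)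
        have hcard1 : t₁.card ≤ (⌈d⌉).toNat := by
          rw [ht1_def, Int.card_Ioc]
          apply Int.toNat_le_toNat
          have h2 : ⌊(N:ℝ)/c + d - 1/2⌋ ≤ ⌊(N:ℝ)/c - 1/2⌋ + ⌈d⌉ := by
            have h3 : (N:ℝ)/c + d - 1/2 ≤ ((N:ℝ)/c - 1/2) + (⌈d⌉:ℝ) := by
              linarith [Int.le_ceil d]
            calc ⌊(N:ℝ)/c + d - 1/2⌋ ≤ ⌊((N:ℝ)/c - 1/2) + (⌈d⌉:ℝ)⌋ := Int.floor_le_floor h3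
              _ = ⌊(N:ℝ)/c - 1/2⌋ + ⌈d⌉ := Int.floor_add_intCast _ _
          omega
        have hcard2 : t₂.card ≤ (⌈d⌉).toNat := by
          rw [ht2_def, Int.card_Ico]
          apply Int.toNat_le_toNat
          have h2 : ⌈-((N:ℝ)/c) - 1/2⌉ ≤ ⌈-((N:ℝ)/c) - d - 1/2⌉ + ⌈d⌉ := by
            calc ⌈-((N:ℝ)/c) - 1/2⌉ = ⌈(-((N:ℝ)/c) - d - 1/2) + d⌉ := by ring_nf
              _ ≤ ⌈-((N:ℝ)/c) - d - 1/2⌉ + ⌈d⌉ := Int.ceil_add_le _ _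
          omega
        have h4 : (s.card : ℝ) ≤ ((t₁.card + t₂.card : ℕ) : ℝ) := by exact_mod_cast h1
        have h5 : ((t₁.card + t₂.card : ℕ) : ℝ) ≤ 2 * ((⌈d⌉).toNat : ℝ) := by
          push_cast
          have h6 : (t₁.card : ℝ) ≤ ((⌈d⌉).toNat : ℝ) := by exact_mod_cast hcard1
          have h7 : (t₂.card : ℝ) ≤ ((⌈d⌉).toNat : ℝ) := by exact_mod_cast hcard2
          linarith
        linarith
      -- norm bound
      rw [hstep1]
      have h8 : ‖∑ n ∈ s, ((if |k n| ≤ x then f n else 0) - (if |k n| ≤ (N:ℝ) then f n else 0))‖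
          ≤ ∑ n ∈ s, ‖(if |k n| ≤ x then f n else 0) - (if |k n| ≤ (N:ℝ) then f n else 0)‖ :=
        norm_sum_le _ _
      have h9 : ∀ n ∈ s, ‖(if |k n| ≤ x then f n else 0) - (if |k n| ≤ (N:ℝ) then f n else 0)‖
          ≤ 1/(N:ℝ) := by
        intro n hn
        obtain ⟨_, hgt⟩ := Finset.mem_filter.1 hn
        rw [if_neg (not_le.2 hgt), sub_zero]
        by_cases h2 : |k n| ≤ x
        · rw [if_pos h2]
          exact le_trans (hfnorm n) (one_div_le_one_div_of_le hN0 hgt.le)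
        · rw [if_neg h2, norm_zero]
          positivity
      have h10 : ∑ n ∈ s, ‖(if |k n| ≤ x then f n else 0) - (if |k n| ≤ (N:ℝ) then f n else 0)‖
          ≤ s.card • (1/(N:ℝ)) := Finset.sum_le_card_nsmul _ _ _ h9
      rw [nsmul_eq_mul] at h10
      have h11 : (s.card : ℝ) * (1/(N:ℝ)) ≤ K * (1/(N:ℝ)) := by
        apply mul_le_mul_of_nonneg_right _ (by positivity)
        rw [hK_def]; exact hcard
      calc ‖_‖ ≤ (s.card:ℝ) * (1/(N:ℝ)) := le_trans h8 h10
        _ ≤ K * (1/(N:ℝ)) := h11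
        _ = K / (N:ℝ) := by ring
    have hB1 : Tendsto (fun x : ℝ => Tle x - Tle (⌊x⌋₊:ℝ)) atTop (nhds 0) := by
      apply squeeze_zero_norm' (a := fun x : ℝ => K / (⌊x⌋₊:ℝ))
      · filter_upwards [eventually_ge_atTop (1:ℝ)] with x hx using hdiff x hx
      · exact tendsto_const_nhds.div_atTop hfloor
    have h12 := hB1.add hB0
    rw [zero_add] at h12
    have h13 : (fun x : ℝ => (Tle x - Tle (⌊x⌋₊:ℝ)) + Tle (⌊x⌋₊:ℝ)) = fun x : ℝ => Tle x := by
      funext x; ring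
    rw [h13] at h12
    exact h12
  -- smooth cutoff weight
  set g : ℝ → ℝ := fun s => -deriv χ₀ s with hg_def
  have hg_cont : Continuous g := (hsmooth.continuous_deriv (by simp)).neg
  set Φ : ℝ → ℂ := fun s => ((Set.Ioc (0:ℝ) γ).indicator g s : ℝ) with hΦ_def
  have hΦint : Integrable Φ := by
    simp only [hΦ_def]
    apply Integrable.ofReal
    exact (integrable_indicator_iff measurableSet_Ioc).2
      ((hg_cont.integrableOn_Icc).mono_set Set.Ioc_subset_Icc_self)
  have hΦone : ∫ s, Φ s = 1 := by
    have hr : ∫ s : ℝ, (Set.Ioc (0:ℝ) γ).indicator g s = 1 := by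
      rw [integral_indicator measurableSet_Ioc, ← intervalIntegral.integral_of_le hγ0.le]
      have hd : ∫ s in (0:ℝ)..γ, deriv χ₀ s = χ₀ γ - χ₀ 0 :=
        intervalIntegral.integral_deriv_eq_sub' χ₀ rfl
          (fun x _ => (hsmooth.differentiable (by simp)) x)
          ((hsmooth.continuous_deriv (by simp)).continuousOn)
      have h2 : ∫ s in (0:ℝ)..γ, g s = -(χ₀ γ - χ₀ 0) := by
        simp only [hg_def]
        rw [intervalIntegral.integral_neg, hd]
      rw [h2, hzero γ (le_of_eq (_root_.abs_of_pos hγ0).symm), hone 0 (by norm_num)]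
      ring
    have hof : (∫ s : ℝ, (((Set.Ioc (0:ℝ) γ).indicator g s : ℝ) : ℂ))
        = ((∫ s : ℝ, (Set.Ioc (0:ℝ) γ).indicator g s : ℝ) : ℂ) := integral_ofReal
    simp only [hΦ_def]
    rw [hof, hr]
    norm_num
  have hΦzero : ∀ s : ℝ, s < 1 → Φ s = 0 := by
    intro s hs
    simp only [hΦ_def]
    by_cases hmem : s ∈ Set.Ioc (0:ℝ) γ
    · rw [Set.indicator_of_mem hmem]
      have hder : deriv χ₀ s = 0 := by
        have hset : Set.Ioo (-1:ℝ) 1 ∈ nhds s := isOpen_Ioo.mem_nhds ⟨by linarith [hmem.1], hs⟩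
        have hev : χ₀ =ᶠ[nhds s] fun _ => 1 :=
          Filter.eventuallyEq_of_mem hset (fun t ht => hone t (abs_lt.2 ⟨ht.1, ht.2⟩))
        rw [hev.deriv_eq]
        simp
      simp [hg_def, hder]
    · rw [Set.indicator_of_notMem hmem]
      norm_num
  -- Step C : integral representation
  have hrep : ∀ M : ℕ, (∑' n : ℤ, ((χ₀ (γ ^ (-(M : ℝ)) * k n) : ℝ) : ℂ) * f n)
        = ∫ s : ℝ, Φ s * Tle (γ ^ M * s)
      ∧ Integrable (fun s : ℝ => Φ s * Tle (γ ^ M * s)) := by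
    intro M
    have hγM : (0:ℝ) < γ ^ M := pow_pos hγ0 M
    have hrpow : γ ^ (-(M:ℝ)) = (γ ^ M)⁻¹ := by
      rw [Real.rpow_neg hγ0.le, Real.rpow_natCast]
    set A : Finset ℤ := (Finset.Icc (-(⌊γ^(M+1)/c⌋+2)) ⌊γ^(M+1)/c⌋).filter
      (fun n => |k n| ≤ γ^(M+1)) with hA_def
    have hmemA : ∀ n : ℤ, n ∈ A ↔ |k n| ≤ γ^(M+1) := fun n =>
      ⟨fun h => (Finset.mem_filter.1 h).2, fun h => Finset.mem_filter.2 ⟨hsupp _ n h, h⟩⟩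
    set a : ℤ → ℝ := fun n => (γ^M)⁻¹ * |k n| with ha_def
    have hapos : ∀ n : ℤ, 0 < a n := fun n => mul_pos (inv_pos.2 hγM) (hkpos n)
    have haleγ : ∀ n ∈ A, a n ≤ γ := by
      intro n hn
      have h := (hmemA n).1 hn
      simp only [ha_def]
      calc (γ^M)⁻¹ * |k n| ≤ (γ^M)⁻¹ * γ^(M+1) :=
            mul_le_mul_of_nonneg_left h (inv_pos.2 hγM).le
        _ = γ := by rw [pow_succ]; field_simp
    have haiff : ∀ (n : ℤ) (s : ℝ), (a n ≤ s ↔ |k n| ≤ γ^M * s) := by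
      intro n s
      simp only [ha_def]
      exact inv_mul_le_iff₀ hγM
    have hχeq : ∀ n : ℤ, χ₀ (γ ^ (-(M:ℝ)) * k n) = χ₀ (a n) := by
      intro n
      rw [hrpow]
      simp only [ha_def]
      rcases abs_cases (k n) with ⟨h1, _⟩ | ⟨h1, _⟩
      · rw [h1]
      · rw [h1, mul_neg, heven]
    have hsupp0 : ∀ n ∉ A, ((χ₀ (γ ^ (-(M:ℝ)) * k n) : ℝ):ℂ) * f n = 0 := by
      intro n hn
      have h : γ^(M+1) < |k n| := not_le.1 (fun h => hn ((hmemA n).2 h))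
      have h0 : χ₀ (a n) = 0 := by
        apply hzero
        rw [_root_.abs_of_pos (hapos n)]
        calc γ = (γ^M)⁻¹ * γ^(M+1) := by rw [pow_succ]; field_simp
          _ ≤ a n := by
              simp only [ha_def]
              exact mul_le_mul_of_nonneg_left h.le (inv_pos.2 hγM).le
      rw [hχeq n, h0]
      simp
    have hFTC : ∀ n ∈ A, χ₀ (a n) = ∫ s : ℝ, (Set.Icc (a n) γ).indicator g s := by
      intro n hn
      rw [integral_indicator measurableSet_Icc, integral_Icc_eq_integral_Ioc,
          ← intervalIntegral.integral_of_le (haleγ n hn)]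
      have hd : ∫ s in (a n)..γ, deriv χ₀ s = χ₀ γ - χ₀ (a n) :=
        intervalIntegral.integral_deriv_eq_sub' χ₀ rfl
          (fun x _ => (hsmooth.differentiable (by simp)) x)
          ((hsmooth.continuous_deriv (by simp)).continuousOn)
      have h2 : ∫ s in (a n)..γ, g s = -(χ₀ γ - χ₀ (a n)) := by
        simp only [hg_def]
        rw [intervalIntegral.integral_neg, hd]
      rw [h2, hzero γ (le_of_eq (_root_.abs_of_pos hγ0).symm)]
      ring
    set F : ℤ → ℝ → ℂ := fun n s => f n * (((Set.Icc (a n) γ).indicator g s : ℝ) : ℂ)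
      with hF_def
    have hFint : ∀ n : ℤ, Integrable (F n) := by
      intro n
      simp only [hF_def]
      apply Integrable.const_mul
      apply Integrable.ofReal
      exact (integrable_indicator_iff measurableSet_Icc).2 (hg_cont.integrableOn_Icc)
    have hpt : ∀ s : ℝ, (∑ n ∈ A, F n s) = Φ s * Tle (γ ^ M * s) := by
      intro s
      by_cases hmem : s ∈ Set.Ioc (0:ℝ) γ
      · have hTle_s : Tle (γ^M * s) = ∑ n ∈ A, (if |k n| ≤ γ^M * s then f n else 0) := by
          simp only [hTle_def]
          apply tsum_eq_sum
          intro n hn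
          apply if_neg
          intro h
          apply hn
          apply (hmemA n).2
          calc |k n| ≤ γ^M * s := h
            _ ≤ γ^M * γ := mul_le_mul_of_nonneg_left hmem.2 hγM.le
            _ = γ^(M+1) := (pow_succ γ M).symm
        rw [hTle_s]
        simp only [hΦ_def]
        rw [Set.indicator_of_mem hmem, Finset.mul_sum]
        apply Finset.sum_congr rfl
        intro n _
        simp only [hF_def]
        by_cases hcond : a n ≤ s
        · rw [Set.indicator_of_mem (show s ∈ Set.Icc (a n) γ from ⟨hcond, hmem.2⟩),
              if_pos ((haiff n s).1 hcond)]
          ring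
        · rw [Set.indicator_of_notMem (fun hIcc => hcond hIcc.1),
              if_neg (fun h => hcond ((haiff n s).2 h))]
          simp
      · have hΦ0 : ((Set.Ioc (0:ℝ) γ).indicator g s : ℝ) = 0 := by
          rw [Set.indicator_of_notMem hmem]
        simp only [hΦ_def]
        rw [hΦ0]
        rw [Complex.ofReal_zero, zero_mul]
        apply Finset.sum_eq_zero
        intro n _
        simp only [hF_def]
        rw [Set.indicator_of_notMem (fun hIcc =>
          hmem ⟨lt_of_lt_of_le (hapos n) hIcc.1, hIcc.2⟩)]
        simp
    have hterm : ∀ n ∈ A, ((χ₀ (γ ^ (-(M:ℝ)) * k n) : ℝ):ℂ) * f n = ∫ s : ℝ, F n s := by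
      intro n hn
      have hof : (∫ s : ℝ, ((((Set.Icc (a n) γ).indicator g s) : ℝ) : ℂ))
          = ((∫ s : ℝ, (Set.Icc (a n) γ).indicator g s : ℝ) : ℂ) := integral_ofReal
      rw [hχeq n, hFTC n hn, ← hof, mul_comm, ← MeasureTheory.integral_const_mul]
    constructor
    · calc (∑' n : ℤ, ((χ₀ (γ ^ (-(M : ℝ)) * k n) : ℝ) : ℂ) * f n)
          = ∑ n ∈ A, ((χ₀ (γ ^ (-(M : ℝ)) * k n) : ℝ) : ℂ) * f n := tsum_eq_sum hsupp0
        _ = ∑ n ∈ A, ∫ s : ℝ, F n s := Finset.sum_congr rfl hterm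
        _ = ∫ s : ℝ, ∑ n ∈ A, F n s := (integral_finset_sum A (fun n _ => hFint n)).symm
        _ = ∫ s : ℝ, Φ s * Tle (γ ^ M * s) := by
            apply integral_congr_ae
            exact Filter.Eventually.of_forall hpt
    · exact (integrable_finset_sum A (fun n _ => hFint n)).congr
        (Filter.Eventually.of_forall hpt)
  -- Step E : limit of the integrals
  have hI : Tendsto (fun M : ℕ => ∫ s : ℝ, Φ s * Tle (γ ^ M * s)) atTop
      (nhds ((β:ℂ) * S)) := by
    rw [Metric.tendsto_atTop]
    intro ε hε
    set C : ℝ := ∫ s, ‖Φ s‖ with hC_def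
    have hC0 : 0 ≤ C := integral_nonneg (fun s => norm_nonneg _)
    have hε' : 0 < ε / (C+1) := div_pos hε (by linarith)
    obtain ⟨X, hX⟩ := (Metric.tendsto_atTop.1 hB) (ε/(C+1)) hε'
    obtain ⟨M₀, hM₀⟩ := Filter.eventually_atTop.1
      (Filter.tendsto_atTop.1 (tendsto_pow_atTop_atTop_of_one_lt hγ) X)
    refine ⟨M₀, fun M hM => ?_⟩
    have hγMX : X ≤ γ ^ M := hM₀ M hM
    have hγM0 : (0:ℝ) < γ^M := pow_pos hγ0 M
    rw [dist_eq_norm]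
    have hkey : (∫ s : ℝ, Φ s * Tle (γ^M*s)) - (β:ℂ)*S
        = ∫ s : ℝ, Φ s * (Tle (γ^M*s) - (β:ℂ)*S) := by
      have h1 : Integrable (fun s : ℝ => Φ s * ((β:ℂ)*S)) := hΦint.mul_const _
      rw [show (fun s : ℝ => Φ s * (Tle (γ^M*s) - (β:ℂ)*S))
          = fun s : ℝ => Φ s * Tle (γ^M*s) - Φ s * ((β:ℂ)*S) from
        funext (fun s => mul_sub _ _ _)]
      rw [integral_sub ((hrep M).2) h1, MeasureTheory.integral_mul_const, hΦone, one_mul]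
    rw [hkey]
    have hbound : ‖∫ s : ℝ, Φ s * (Tle (γ^M*s) - (β:ℂ)*S)‖
        ≤ ∫ s : ℝ, ‖Φ s‖ * (ε/(C+1)) := by
      apply norm_integral_le_of_norm_le ((hΦint.norm).mul_const _)
      apply Filter.Eventually.of_forall
      intro s
      rw [norm_mul]
      by_cases h1s : 1 ≤ s
      · apply mul_le_mul_of_nonneg_left _ (norm_nonneg _)
        have h2 : X ≤ γ^M * s := le_trans hγMX (le_mul_of_one_le_right hγM0.le h1s)
        have h3 := hX (γ^M * s) h2
        rw [dist_eq_norm] at h3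
        exact h3.le
      · rw [hΦzero s (not_le.1 h1s)]
        simp only [norm_zero, zero_mul]
        positivity
    have hfin : (∫ s : ℝ, ‖Φ s‖ * (ε/(C+1))) < ε := by
      rw [MeasureTheory.integral_mul_const, ← hC_def]
      have h2 : C * (ε/(C+1)) = C * ε / (C+1) := by ring
      rw [h2, div_lt_iff₀ (by linarith : (0:ℝ) < C+1)]
      nlinarith
    exact lt_of_le_of_lt hbound hfin
  have hmain : ∀ M : ℕ, (∑' n : ℤ,
        ((χ₀ (γ ^ (-(M : ℝ)) * k n) : ℝ) : ℂ) *
          (Complex.exp (-Complex.I * (k n : ℂ) * (τ : ℂ)) /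
            (-Complex.I * (k n : ℂ) + (e : ℂ))))
      = ∫ s : ℝ, Φ s * Tle (γ ^ M * s) := by
    intro M
    have := (hrep M).1
    simpa only [hf_def] using this
  simp only [hmain]
  have h2 := hI.const_mul ((1/β : ℂ))
  convert h2 using 2
  field_simp
end
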